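/- arXiv:2508.04320 — 2 statements merged into one kernel-verified Lean document; each statement's English description precedes it below -/
import Mathlib

section
/- Let J = Z and suppose the triangular system x(n+1) = (A11(n) A12(n); 0 A22(n)) x(n) admits an exponential dichotomy on Z. Then the diagonal system x(n+1) = diag(A11(n), A22(n)) x(n) admits an exponential dichotomy on Z if and only if the only bounded sequence (x2(n))_{n∈Z} in X2 satisfying x2(n+1) = A22(n) x2(n) for all n ∈ Z is the zero sequence. -/
open Real ContinuousLinearMap

noncomputable section

universe u

variable {X : Type u} [NormedAddCommGroup X] [NormedSpace ℝ X]

/-- The cocycle associated with the system `x(n+1) = A(n) x(n)`, as a function of the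
number of steps: `cocycleAux A n k = A(n+k-1) ∘ ⋯ ∘ A(n)`. -/
def cocycleAux (A : ℤ → X →L[ℝ] X) (n : ℤ) : ℕ → (X →L[ℝ] X)
  | 0 => ContinuousLinearMap.id ℝ X
  | k + 1 => (A (n + k)).comp (cocycleAux A n k)

/-- The cocycle `Φ(m, n) = A(m-1) ⋯ A(n)` for `m > n`, and `Φ(n, n) = Id`. -/
def Phi (A : ℤ → X →L[ℝ] X) (m n : ℤ) : X →L[ℝ] X :=
  cocycleAux A n (m - n).toNat

/-- The system `x(n+1) = A(n) x(n)`, `n ∈ J'`, admits an exponential dichotomy on `J`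
with respect to the family of (bounded) projections `P(n)`, `n ∈ J`:
there are constants `K, α > 0` such that
(i) `P(n)` are projections, `A(n) P(n) = P(n+1) A(n)` for `n ∈ J'`, and `A(n)` maps
`ker P(n)` bijectively onto `ker P(n+1)` for `n ∈ J'`;
(ii) `‖Φ(m,n) P(n)‖ ≤ K e^{-α (m-n)}` for `m ≥ n` in `J`;
(iii) `‖Φ(m,n) (Id - P(n))‖ ≤ K e^{-α (n-m)}` for `m ≤ n` in `J`, where
`Φ(m,n) : ker P(n) → ker P(m)` denotes the inverse of `Φ(n,m)` restricted to `ker P(m)`;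
the latter is phrased as: whenever `x ∈ ker P(m)` and `Φ(n,m) x = (Id - P(n)) y`,
then `‖x‖ ≤ K e^{-α (n-m)} ‖y‖`. -/
def IsExpDichotomy (J J' : Set ℤ) (A P : ℤ → X →L[ℝ] X) : Prop :=
  ∃ K α : ℝ, 0 < K ∧ 0 < α ∧
    (∀ n ∈ J, (P n).comp (P n) = P n) ∧
    (∀ n ∈ J', (A n).comp (P n) = (P (n + 1)).comp (A n)) ∧
    (∀ n ∈ J', Set.BijOn (A n) {x : X | P n x = 0} {x : X | P (n + 1) x = 0}) ∧
    (∀ m n : ℤ, m ∈ J → n ∈ J → n ≤ m →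
      ‖(Phi A m n).comp (P n)‖ ≤ K * Real.exp (-α * ((m : ℝ) - (n : ℝ)))) ∧
    (∀ m n : ℤ, m ∈ J → n ∈ J → m ≤ n → ∀ x y : X,
      P m x = 0 → Phi A n m x = y - P n y →
      ‖x‖ ≤ K * Real.exp (-α * ((n : ℝ) - (m : ℝ))) * ‖y‖)

/-- The system `x(n+1) = A(n) x(n)`, `n ∈ J'`, admits an exponential dichotomy on `J`. -/
def ExpDichotomy (J J' : Set ℤ) (A : ℤ → X →L[ℝ] X) : Prop :=
  ∃ P : ℤ → X →L[ℝ] X, IsExpDichotomy J J' A P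

/-- A subspace (given as a set) `S` of `X` is complemented: there is a closed subspace `Z`
of `X` with `X = S ⊕ Z`. -/
def IsComplementedSubspace (S : Set X) : Prop :=
  ∃ Z : Submodule ℝ X, IsClosed (Z : Set X) ∧
    (∀ v ∈ S, v ∈ Z → v = (0 : X)) ∧ ∀ v : X, ∃ s ∈ S, ∃ z ∈ Z, v = s + z

/-- The subspace `S = {v : sup_{n ∈ ℤ⁺} ‖Φ(n,0) v‖ < ∞}` of initial conditions of bounded
forward solutions. -/
def Sset (A : ℤ → X →L[ℝ] X) : Set X :=
  {v : X | ∃ C : ℝ, ∀ n : ℤ, 0 ≤ n → ‖Phi A n 0 v‖ ≤ C}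

/-- The subspace `U(m)` of all `v` for which there is a bounded sequence `(x(n))_{n ≤ m}`
with `x(m) = v` and `x(n) = A(n-1) x(n-1)` for `n ≤ m`. -/
def Uset (A : ℤ → X →L[ℝ] X) (m : ℤ) : Set X :=
  {v : X | ∃ x : ℤ → X, x m = v ∧ (∃ C : ℝ, ∀ n : ℤ, n ≤ m → ‖x n‖ ≤ C) ∧
    ∀ n : ℤ, n ≤ m → x n = A (n - 1) (x (n - 1))}

variable {X1 : Type u} {X2 : Type u} [NormedAddCommGroup X1] [NormedSpace ℝ X1]
  [NormedAddCommGroup X2] [NormedSpace ℝ X2]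

/-- The triangular system operator `(x1, x2) ↦ (A11(n) x1 + A12(n) x2, A22(n) x2)`. -/
def triangular (A11 : ℤ → X1 →L[ℝ] X1) (A12 : ℤ → X2 →L[ℝ] X1)
    (A22 : ℤ → X2 →L[ℝ] X2) (n : ℤ) : (X1 × X2) →L[ℝ] X1 × X2 :=
  (((A11 n).comp (fst ℝ X1 X2)) + ((A12 n).comp (snd ℝ X1 X2))).prod
    ((A22 n).comp (snd ℝ X1 X2))

/-- The diagonal system operator `(x1, x2) ↦ (A11(n) x1, A22(n) x2)`. -/
def diagonal (A11 : ℤ → X1 →L[ℝ] X1) (A22 : ℤ → X2 →L[ℝ] X2) (n : ℤ) :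
    (X1 × X2) →L[ℝ] X1 × X2 :=
  (A11 n).prodMap (A22 n)

section AuxLemmas

open Filter

lemma eq_zero_of_norm_le_exp (v : X) {C α : ℝ} (hα : 0 < α)
    (h : ∀ s : ℕ, ‖v‖ ≤ C * Real.exp (-α * s)) : v = 0 := by
  have hT : Tendsto (fun s : ℕ => C * Real.exp (-α * s)) atTop (nhds 0) := by
    have h1 : ∀ s : ℕ, C * Real.exp (-α * s) = C * (Real.exp (-α)) ^ s := by
      intro s
      rw [← Real.exp_nat_mul]
      ring_nf
    simp only [h1]
    have : Tendsto (fun s : ℕ => (Real.exp (-α)) ^ s) atTop (nhds 0) :=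
      tendsto_pow_atTop_nhds_zero_of_lt_one (le_of_lt (Real.exp_pos _))
        (by rw [Real.exp_lt_one_iff]; linarith)
    simpa using this.const_mul C
  have : ‖v‖ ≤ 0 := ge_of_tendsto hT (Eventually.of_forall h)
  simpa using this.antisymm (norm_nonneg v)

lemma Phi_self (A : ℤ → X →L[ℝ] X) (n : ℤ) (v : X) : Phi A n n v = v := by
  unfold Phi
  simp [cocycleAux]

lemma Phi_succ (A : ℤ → X →L[ℝ] X) {m n : ℤ} (h : n ≤ m) (v : X) :
    Phi A (m + 1) n v = A m (Phi A m n v) := by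
  obtain ⟨k, rfl⟩ := Int.le.dest h
  unfold Phi
  have h1 : (n + k + 1 - n).toNat = k + 1 := by omega
  have h2 : (n + k - n).toNat = k := by omega
  rw [h1, h2]
  simp [cocycleAux]

lemma Phi_sol (A : ℤ → X →L[ℝ] X) (x : ℤ → X) {m n : ℤ} (h : n ≤ m)
    (hx : ∀ j, n ≤ j → j < m → x (j + 1) = A j (x j)) :
    Phi A m n (x n) = x m := by
  obtain ⟨k, rfl⟩ := Int.le.dest h
  induction k with
  | zero => simpa using Phi_self A n (x n)
  | succ k ih =>
      have hk : n ≤ n + (k : ℤ) := by omega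
      have e : n + ((k + 1 : ℕ) : ℤ) = (n + (k : ℤ)) + 1 := by push_cast; ring
      rw [e, Phi_succ A hk, ih (by omega) (fun j h1 h2 => hx j h1 (by omega)),
        ← hx (n + k) (by omega) (by omega)]

lemma bounded_solution_eq_zero (A Q : ℤ → X →L[ℝ] X)
    (hd : IsExpDichotomy Set.univ Set.univ A Q)
    (x : ℤ → X) (C : ℝ) (hC : ∀ n, ‖x n‖ ≤ C)
    (hx : ∀ n, x (n + 1) = A n (x n)) : ∀ n, x n = 0 := by
  obtain ⟨K, α, hK, hα, h3, h4, _h5, h6, h7⟩ := hd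
  have hC0 : 0 ≤ C := le_trans (norm_nonneg _) (hC 0)
  -- ‖Q m‖ ≤ K
  have hQnorm : ∀ m : ℤ, ∀ v : X, ‖Q m v‖ ≤ K * ‖v‖ := by
    intro m v
    have h := h6 m m trivial trivial le_rfl
    have h2 : ‖(Phi A m m).comp (Q m) v‖ ≤ ‖(Phi A m m).comp (Q m)‖ * ‖v‖ :=
      le_opNorm _ v
    rw [comp_apply, Phi_self] at h2
    calc ‖Q m v‖ ≤ ‖(Phi A m m).comp (Q m)‖ * ‖v‖ := h2
      _ ≤ (K * Real.exp (-α * ((m : ℝ) - m))) * ‖v‖ := by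
          apply mul_le_mul_of_nonneg_right h (norm_nonneg _)
      _ = K * ‖v‖ := by norm_num
  -- Q n (x n) is a solution sequence
  have hq : ∀ n, Q (n + 1) (x (n + 1)) = A n (Q n (x n)) := by
    intro n
    have h := h4 n trivial
    have h' : A n (Q n (x n)) = Q (n + 1) (A n (x n)) := by
      have := congrArg (fun (T : X →L[ℝ] X) => T (x n)) h
      simpa using this
    rw [h', ← hx n]
  -- stable part vanishes
  have hstable : ∀ n, Q n (x n) = 0 := by
    intro n
    apply eq_zero_of_norm_le_exp (C := K * (K * C)) _ hα
    intro s
    set m : ℤ := n - s with hm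
    have hmn : m ≤ n := by omega
    have hprop : Phi A n m (Q m (x m)) = Q n (x n) :=
      Phi_sol A (fun k => Q k (x k)) hmn (fun j _ _ => hq j)
    have hidem : Q m (x m) = Q m (Q m (x m)) := by
      have := congrArg (fun (T : X →L[ℝ] X) => T (x m)) (h3 m trivial)
      simpa using this.symm
    have hb : ‖Phi A n m (Q m (Q m (x m)))‖ ≤
        (K * Real.exp (-α * ((n : ℝ) - m))) * ‖Q m (x m)‖ := by
      have h2 : ‖(Phi A n m).comp (Q m) (Q m (x m))‖ ≤
          ‖(Phi A n m).comp (Q m)‖ * ‖Q m (x m)‖ := le_opNorm _ _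
      rw [comp_apply] at h2
      exact le_trans h2 (mul_le_mul_of_nonneg_right
        (h6 n m trivial trivial hmn) (norm_nonneg _))
    rw [← hidem, hprop] at hb
    have hcast : ((n : ℝ) - m) = (s : ℕ) := by
      rw [hm]; push_cast; ring
    rw [hcast] at hb
    calc ‖Q n (x n)‖ ≤ (K * Real.exp (-α * s)) * ‖Q m (x m)‖ := hb
      _ ≤ (K * Real.exp (-α * s)) * (K * C) := by
          apply mul_le_mul_of_nonneg_left
          · exact le_trans (hQnorm m (x m)) (by
              apply mul_le_mul_of_nonneg_left (hC m) (le_of_lt hK))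
          · positivity
      _ = K * (K * C) * Real.exp (-α * s) := by ring
  -- unstable estimate kills everything
  intro m
  apply eq_zero_of_norm_le_exp (C := K * C) _ hα
  intro s
  set n : ℤ := m + s with hn
  have hmn : m ≤ n := by omega
  have hprop : Phi A n m (x m) = x n :=
    Phi_sol A x hmn (fun j _ _ => hx j)
  have h := h7 m n trivial trivial hmn (x m) (x n) (hstable m)
    (by rw [hprop, hstable n, sub_zero])
  have hcast : ((n : ℝ) - m) = (s : ℕ) := by rw [hn]; push_cast; ring
  rw [hcast] at h
  calc ‖x m‖ ≤ K * Real.exp (-α * s) * ‖x n‖ := h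
    _ ≤ K * Real.exp (-α * s) * C := by
        apply mul_le_mul_of_nonneg_left (hC n); positivity
    _ = K * C * Real.exp (-α * s) := by ring

lemma exists_delta_sol (A Q : ℤ → X →L[ℝ] X) (K α : ℝ)
    (h3 : ∀ n : ℤ, (Q n).comp (Q n) = Q n)
    (h5 : ∀ n : ℤ, Set.BijOn (A n) {x : X | Q n x = 0} {x : X | Q (n + 1) x = 0})
    (h6 : ∀ m n : ℤ, n ≤ m → ‖(Phi A m n).comp (Q n)‖ ≤ K * Real.exp (-α * ((m : ℝ) - n)))
    (h7 : ∀ m n : ℤ, m ≤ n → ∀ x y : X, Q m x = 0 → Phi A n m x = y - Q n y →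
      ‖x‖ ≤ K * Real.exp (-α * ((n : ℝ) - m)) * ‖y‖)
    (n : ℤ) (ξ : X) :
    ∃ y : ℤ → X, (∀ k, y (k + 1) = A k (y k) + (if k = n then ξ else 0)) ∧
      ∀ k, ‖y k‖ ≤ K * Real.exp (-α * |(k : ℝ) - n - 1|) * ‖ξ‖ := by
  set p : ℤ := n + 1 with hp
  have hQQ : ∀ (m : ℤ) (v : X), Q m (Q m v) = Q m v := by
    intro m v
    have := congrArg (fun (T : X →L[ℝ] X) => T v) (h3 m)
    simpa using this
  set w : X := ξ - Q p ξ with hwdef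
  have hw : Q p w = 0 := by
    rw [hwdef, map_sub, hQQ, sub_self]
  -- backward chain
  have key : ∀ (i : ℕ) (v : X), Q (p - i) v = 0 →
      ∃ u : X, Q (p - ((i + 1 : ℕ) : ℤ)) u = 0 ∧ A (p - ((i + 1 : ℕ) : ℤ)) u = v := by
    intro i v hv
    have hb := (h5 (p - ((i + 1 : ℕ) : ℤ))).surjOn
    have hv' : v ∈ {x : X | Q (p - ((i + 1 : ℕ) : ℤ) + 1) x = 0} := by
      show Q (p - ((i + 1 : ℕ) : ℤ) + 1) v = 0
      rw [show p - ((i + 1 : ℕ) : ℤ) + 1 = p - (i : ℤ) by push_cast; ring]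
      exact hv
    obtain ⟨u, hu1, hu2⟩ := hb hv'
    exact ⟨u, hu1, hu2⟩
  let Tt : ℕ → Type _ := fun i => {v : X // Q (p - i) v = 0}
  let b : ∀ i : ℕ, Tt i := fun i => Nat.rec (motive := Tt)
    ⟨w, by simpa using hw⟩
    (fun i prev => ⟨(key i prev.1 prev.2).choose, (key i prev.1 prev.2).choose_spec.1⟩) i
  have bstep : ∀ i : ℕ, A (p - ((i + 1 : ℕ) : ℤ)) (b (i + 1)).1 = (b i).1 := by
    intro i
    exact (key i (b i).1 (b i).2).choose_spec.2
  have bker : ∀ (i : ℕ) (m : ℤ), m = p - (i : ℤ) → Q m ((b i).1) = 0 := by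
    intro i m hm
    subst hm
    exact (b i).2
  have b0 : (b 0).1 = w := rfl
  -- the backward sequence
  set u : ℤ → X := fun k => -(b (p - k).toNat).1 with hudef
  have hu_ker : ∀ k ≤ p, Q k (u k) = 0 := by
    intro k hk
    have h1 : Q k ((b (p - k).toNat).1) = 0 := bker (p - k).toNat k (by omega)
    show Q k (-(b (p - k).toNat).1) = 0
    rw [map_neg, h1, neg_zero]
  have hu_step : ∀ k < p, A k (u k) = u (k + 1) := by
    intro k hk
    obtain ⟨i, hi⟩ : ∃ i : ℕ, p - (k + 1) = (i : ℤ) :=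
      ⟨(p - (k + 1)).toNat, (Int.toNat_of_nonneg (by omega)).symm⟩
    have e1 : (p - k).toNat = i + 1 := by omega
    have e2 : (p - (k + 1)).toNat = i := by omega
    show A k (-(b (p - k).toNat).1) = -(b (p - (k + 1)).toNat).1
    rw [e1, e2, map_neg, neg_inj]
    have hb := bstep i
    rw [show k = p - ((i + 1 : ℕ) : ℤ) by push_cast; omega]
    exact hb
  have hu_p : u p = -w := by
    show -(b (p - p).toNat).1 = -w
    rw [show (p - p).toNat = 0 by omega, b0]
  -- the solution
  refine ⟨fun k => if p ≤ k then Phi A k p (Q p ξ) else u k, ?_, ?_⟩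
  · intro k
    by_cases hk : p ≤ k
    · have hk1 : p ≤ k + 1 := by omega
      have hkn : ¬(k = n) := by omega
      simp only [if_pos hk, if_pos hk1, if_neg hkn, add_zero]
      exact Phi_succ A hk _
    · by_cases hkn : k = n
      · have h1 : p ≤ k + 1 := by omega
        simp only [if_pos h1, if_neg hk, if_pos hkn]
        have e : k + 1 = p := by omega
        have hstep : A k (u k) = u (k + 1) := hu_step k (by omega)
        rw [e, Phi_self, hstep, e, hu_p, hwdef]
        abel
      · have hklt : k < n := by omega
        have h1 : ¬(p ≤ k + 1) := by omega
        simp only [if_neg h1, if_neg hk, if_neg hkn, add_zero]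
        exact (hu_step k (by omega)).symm
  · intro k
    by_cases hk : p ≤ k
    · simp only [if_pos hk]
      have hpr : (p : ℝ) = (n : ℝ) + 1 := by rw [hp]; push_cast; ring
      have hkr : (p : ℝ) ≤ (k : ℝ) := by exact_mod_cast hk
      have habs : |(k : ℝ) - n - 1| = (k : ℝ) - p := by
        rw [abs_of_nonneg] <;> linarith
      rw [habs]
      calc ‖Phi A k p (Q p ξ)‖ = ‖(Phi A k p).comp (Q p) ξ‖ := by rw [comp_apply]
        _ ≤ ‖(Phi A k p).comp (Q p)‖ * ‖ξ‖ := le_opNorm _ _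
        _ ≤ K * Real.exp (-α * ((k : ℝ) - p)) * ‖ξ‖ :=
            mul_le_mul_of_nonneg_right (h6 k p hk) (norm_nonneg _)
    · simp only [if_neg hk]
      have hkp : k ≤ p := by omega
      have hphi : Phi A p k (u k) = (-ξ) - Q p (-ξ) := by
        have := Phi_sol A u hkp (fun j h1 h2 => (hu_step j h2).symm)
        rw [this, hu_p, hwdef, map_neg]
        abel
      have hest := h7 k p hkp (u k) (-ξ) (hu_ker k hkp) hphi
      have hpr : (p : ℝ) = (n : ℝ) + 1 := by rw [hp]; push_cast; ring
      have hkr : (k : ℝ) ≤ (p : ℝ) := by exact_mod_cast hkp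
      have habs : |(k : ℝ) - n - 1| = (p : ℝ) - k := by
        rw [abs_of_nonpos] <;> linarith
      rw [habs]
      exact le_trans hest (le_of_eq (by rw [norm_neg]))

lemma perron (A : ℤ → X →L[ℝ] X) (K α : ℝ) (hK : 0 < K) (hα : 0 < α)
    (Hd : ∀ (n : ℤ) (ξ : X), ∃ y : ℤ → X,
      (∀ k, y (k + 1) = A k (y k) + (if k = n then ξ else 0)) ∧
      ∀ k, ‖y k‖ ≤ K * Real.exp (-α * |(k : ℝ) - n - 1|) * ‖ξ‖)
    (Huniq : ∀ x : ℤ → X, (∃ C : ℝ, ∀ n, ‖x n‖ ≤ C) → (∀ n, x (n + 1) = A n (x n)) →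
      ∀ n, x n = 0) :
    ExpDichotomy (Set.univ : Set ℤ) Set.univ A := by
  classical
  set sol : ℤ → X → ℤ → X := fun m ξ => (Hd m ξ).choose with hsol
  have sol_eq : ∀ m ξ k, sol m ξ (k + 1) = A k (sol m ξ k) + (if k = m then ξ else 0) :=
    fun m ξ => (Hd m ξ).choose_spec.1
  have sol_bd : ∀ m ξ k, ‖sol m ξ k‖ ≤ K * Real.exp (-α * |(k : ℝ) - m - 1|) * ‖ξ‖ :=
    fun m ξ => (Hd m ξ).choose_spec.2
  have hexp1 : ∀ r : ℝ, Real.exp (-α * |r|) ≤ 1 := by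
    intro r
    rw [show (1 : ℝ) = Real.exp 0 by simp]
    apply Real.exp_le_exp.mpr
    have := abs_nonneg r
    nlinarith
  have sol_bd' : ∀ m ξ k, ‖sol m ξ k‖ ≤ K * ‖ξ‖ := by
    intro m ξ k
    refine le_trans (sol_bd m ξ k) ?_
    calc K * Real.exp (-α * |(k : ℝ) - m - 1|) * ‖ξ‖
        ≤ (K * 1) * ‖ξ‖ := by
          apply mul_le_mul_of_nonneg_right _ (norm_nonneg ξ)
          exact mul_le_mul_of_nonneg_left (hexp1 _) hK.le
      _ = K * ‖ξ‖ := by ring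
  -- uniqueness of bounded solutions with a given forcing
  have uniq2 : ∀ (f x x' : ℤ → X), (∀ k, x (k + 1) = A k (x k) + f k) →
      (∃ C, ∀ k, ‖x k‖ ≤ C) → (∀ k, x' (k + 1) = A k (x' k) + f k) →
      (∃ C, ∀ k, ‖x' k‖ ≤ C) → ∀ k, x k = x' k := by
    rintro f x x' hx ⟨C, hC⟩ hx' ⟨C', hC'⟩ k
    have hz := Huniq (fun j => x j - x' j)
      ⟨C + C', fun j => le_trans (norm_sub_le _ _) (add_le_add (hC j) (hC' j))⟩
      (fun j => by
        show x (j + 1) - x' (j + 1) = A j (x j - x' j)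
        rw [hx j, hx' j, map_sub]
        abel)
    exact sub_eq_zero.mp (hz k)
  -- additivity and homogeneity of the solution map
  have hadd : ∀ (m : ℤ) (ξ η : X) (k : ℤ),
      sol (m - 1) (ξ + η) k = sol (m - 1) ξ k + sol (m - 1) η k := by
    intro m ξ η
    apply uniq2 (fun k => if k = m - 1 then ξ + η else 0)
    · exact sol_eq _ _
    · exact ⟨K * ‖ξ + η‖, fun k => sol_bd' _ _ _⟩
    · intro k
      show sol (m - 1) ξ (k + 1) + sol (m - 1) η (k + 1) =
        A k (sol (m - 1) ξ k + sol (m - 1) η k) + (if k = m - 1 then ξ + η else 0)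
      rw [sol_eq, sol_eq, map_add]
      split_ifs <;> abel
    · exact ⟨K * ‖ξ‖ + K * ‖η‖, fun k =>
        le_trans (norm_add_le _ _) (add_le_add (sol_bd' _ _ _) (sol_bd' _ _ _))⟩
  have hsmul : ∀ (m : ℤ) (c : ℝ) (ξ : X) (k : ℤ),
      sol (m - 1) (c • ξ) k = c • sol (m - 1) ξ k := by
    intro m c ξ
    apply uniq2 (fun k => if k = m - 1 then c • ξ else 0)
    · exact sol_eq _ _
    · exact ⟨K * ‖c • ξ‖, fun k => sol_bd' _ _ _⟩
    · intro k
      show c • sol (m - 1) ξ (k + 1) =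
        A k (c • sol (m - 1) ξ k) + (if k = m - 1 then c • ξ else 0)
      rw [sol_eq (m - 1) ξ k, smul_add, map_smul]
      congr 1
      split_ifs <;> simp
    · exact ⟨‖c‖ * (K * ‖ξ‖), fun k => by
        rw [norm_smul]
        exact mul_le_mul_of_nonneg_left (sol_bd' _ _ _) (norm_nonneg c)⟩
  -- the projections
  set P : ℤ → X →L[ℝ] X := fun m => LinearMap.mkContinuous
    ({ toFun := fun ξ => sol (m - 1) ξ m
       map_add' := fun ξ η => hadd m ξ η m
       map_smul' := fun c ξ => hsmul m c ξ m } : X →ₗ[ℝ] X)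
    K (fun ξ => sol_bd' (m - 1) ξ m) with hPdef
  have hP : ∀ (m : ℤ) (ξ : X), P m ξ = sol (m - 1) ξ m := fun m ξ => rfl
  have hPnorm : ∀ (m : ℤ) (ξ : X), ‖P m ξ‖ ≤ K * ‖ξ‖ := by
    intro m ξ; rw [hP]; exact sol_bd' _ _ _
  -- P fixes vectors with bounded forward orbit
  have fixS : ∀ (m : ℤ) (v : X) (C : ℝ), (∀ k, m ≤ k → ‖Phi A k m v‖ ≤ C) → P m v = v := by
    intro m v C hC
    have hz := uniq2 (fun k => if k = m - 1 then v else 0)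
      (sol (m - 1) v) (fun k => if m ≤ k then Phi A k m v else 0)
      (sol_eq _ _) ⟨K * ‖v‖, fun k => sol_bd' _ _ _⟩
      ?_ ⟨max C 0, ?_⟩
    · have hz' : ∀ k, sol (m - 1) v k = if m ≤ k then Phi A k m v else 0 := hz
      rw [hP, hz' m, if_pos le_rfl, Phi_self]
    · intro k
      by_cases hk : m ≤ k
      · have h1 : m ≤ k + 1 := by omega
        have h2 : ¬(k = m - 1) := by omega
        simp only [if_pos hk, if_pos h1, if_neg h2, add_zero]
        exact Phi_succ A hk v
      · by_cases hk2 : k = m - 1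
        · have h1 : m ≤ k + 1 := by omega
          have e : k + 1 = m := by omega
          simp only [if_neg hk, if_pos h1, if_pos hk2, map_zero, zero_add, e, Phi_self]
          simp
        · have h1 : ¬(m ≤ k + 1) := by omega
          simp only [if_neg hk, if_neg h1, if_neg hk2, map_zero, zero_add]
    · intro k
      by_cases hk : m ≤ k
      · simp only [if_pos hk]
        exact le_trans (hC k hk) (le_max_left _ _)
      · simp only [if_neg hk, norm_zero]
        exact le_max_right _ _
  -- P kills vectors with bounded backward orbit, with exponential estimate
  have killU : ∀ (m : ℤ) (x : ℤ → X) (C : ℝ), (∀ k, k ≤ m → ‖x k‖ ≤ C) →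
      (∀ k, k < m → x (k + 1) = A k (x k)) →
      P m (x m) = 0 ∧ ∀ k, k ≤ m - 1 → ‖x k‖ ≤ K * Real.exp (-α * ((m : ℝ) - k)) * ‖x m‖ := by
    intro m x C hC hx
    have hz := uniq2 (fun k => if k = m - 1 then x m else 0)
      (sol (m - 1) (x m)) (fun k => if k ≤ m - 1 then -x k else 0)
      (sol_eq _ _) ⟨K * ‖x m‖, fun k => sol_bd' _ _ _⟩
      ?_ ⟨max C 0, ?_⟩
    · have hz' : ∀ k, sol (m - 1) (x m) k = if k ≤ m - 1 then -x k else 0 := hz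
      constructor
      · rw [hP, hz' m, if_neg (show ¬(m ≤ m - 1) by omega)]
      · intro k hk
        have hb := sol_bd (m - 1) (x m) k
        rw [hz' k, if_pos hk, norm_neg] at hb
        have habs : |(k : ℝ) - ((m - 1 : ℤ) : ℝ) - 1| = (m : ℝ) - k := by
          have h1 : (k : ℝ) ≤ (m : ℝ) - 1 := by
            have h2 : ((k : ℤ) : ℝ) ≤ (((m - 1 : ℤ)) : ℝ) := by exact_mod_cast hk
            push_cast at h2; linarith
          rw [abs_of_nonpos] <;> push_cast <;> linarith
        rwa [habs] at hb
    · intro k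
      by_cases hk : k + 1 ≤ m - 1
      · have h1 : k ≤ m - 1 := by omega
        have h2 : ¬(k = m - 1) := by omega
        simp only [if_pos hk, if_pos h1, if_neg h2, add_zero]
        rw [hx k (by omega), map_neg]
      · by_cases hk2 : k = m - 1
        · have h1 : k ≤ m - 1 := le_of_eq hk2
          have h2 : ¬(k + 1 ≤ m - 1) := by omega
          simp only [if_neg h2, if_pos h1, if_pos hk2, map_neg]
          rw [← hx k (by omega), show k + 1 = m by omega]
          abel
        · have h1 : ¬(k ≤ m - 1) := by omega
          have h2 : ¬(k + 1 ≤ m - 1) := by omega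
          simp only [if_neg h1, if_neg h2, if_neg hk2, map_zero, zero_add]
    · intro k
      by_cases hk : k ≤ m - 1
      · simp only [if_pos hk, norm_neg]
        exact le_trans (hC k (by omega)) (le_max_left _ _)
      · simp only [if_neg hk, norm_zero]
        exact le_max_right _ _
  -- the residual ξ - P m ξ has a bounded backward orbit
  have resU : ∀ (m : ℤ) (ξ : X), ∃ x : ℤ → X, x m = ξ - P m ξ ∧
      (∀ k, k < m → x (k + 1) = A k (x k)) ∧ ∀ k, k ≤ m → ‖x k‖ ≤ (1 + K) * ‖ξ‖ := by
    intro m ξ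
    refine ⟨fun k => if k = m then ξ - sol (m - 1) ξ m else -sol (m - 1) ξ k,
      by simp [hP], ?_, ?_⟩
    · intro k hk
      by_cases hk1 : k = m - 1
      · have e : k + 1 = m := by omega
        have h2 : ¬(k = m) := by omega
        show (if k + 1 = m then ξ - sol (m - 1) ξ m else -sol (m - 1) ξ (k + 1)) =
          A k (if k = m then ξ - sol (m - 1) ξ m else -sol (m - 1) ξ k)
        rw [if_pos e, if_neg h2, map_neg]
        have hs := sol_eq (m - 1) ξ k
        rw [if_pos hk1] at hs
        rw [e] at hs
        rw [hs]
        abel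
      · have h1 : ¬(k + 1 = m) := by omega
        have h2 : ¬(k = m) := by omega
        show (if k + 1 = m then ξ - sol (m - 1) ξ m else -sol (m - 1) ξ (k + 1)) =
          A k (if k = m then ξ - sol (m - 1) ξ m else -sol (m - 1) ξ k)
        rw [if_neg h1, if_neg h2]
        have hs := sol_eq (m - 1) ξ k
        rw [if_neg hk1, add_zero] at hs
        rw [hs, map_neg]
    · intro k hk
      have hn := norm_nonneg ξ
      by_cases hk1 : k = m
      · simp only [if_pos hk1]
        refine le_trans (norm_sub_le _ _) ?_
        have := sol_bd' (m - 1) ξ m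
        linarith
      · simp only [if_neg hk1, norm_neg]
        have := sol_bd' (m - 1) ξ k
        linarith
  -- kernel elements have bounded backward orbits
  have kerU : ∀ (m : ℤ) (v : X), P m v = 0 → ∃ x : ℤ → X, x m = v ∧
      (∀ k, k < m → x (k + 1) = A k (x k)) ∧ ∀ k, k ≤ m → ‖x k‖ ≤ (1 + K) * ‖v‖ := by
    intro m v hv
    obtain ⟨x, hxm, hrec, hbd⟩ := resU m v
    rw [hv, sub_zero] at hxm
    exact ⟨x, hxm, hrec, hbd⟩
  -- forward orbit of P m ξ is the tail of sol
  have PS : ∀ (m : ℤ) (ξ : X) (k : ℤ), m ≤ k → Phi A k m (P m ξ) = sol (m - 1) ξ k := by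
    intro m ξ k hk
    rw [hP]
    exact Phi_sol A (sol (m - 1) ξ) hk
      (fun j h1 _ => by rw [sol_eq, if_neg (by omega), add_zero])
  -- extension of kernel witnesses one step forward
  have extU : ∀ (m : ℤ) (v : X), P m v = 0 → P (m + 1) (A m v) = 0 := by
    intro m v hv
    obtain ⟨x, hxm, hrec, hbd⟩ := kerU m v hv
    have := killU (m + 1) (fun k => if k = m + 1 then A m (x m) else x k)
      (max ((1 + K) * ‖v‖) ‖A m (x m)‖) ?_ ?_
    · have h1 := this.1
      simp only [if_pos rfl, hxm] at h1
      exact h1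
    · intro k hk
      by_cases hk1 : k = m + 1
      · simp only [if_pos hk1]; exact le_max_right _ _
      · simp only [if_neg hk1]
        exact le_trans (hbd k (by omega)) (le_max_left _ _)
    · intro k hk
      by_cases hk1 : k + 1 = m + 1
      · have e : k = m := by omega
        subst e
        show (if k + 1 = k + 1 then A k (x k) else x (k + 1)) =
          A k (if k = k + 1 then A k (x k) else x k)
        rw [if_pos rfl, if_neg (show ¬(k = k + 1) by omega)]
      · simp only [if_neg hk1, if_neg (show ¬(k = m + 1) by omega)]
        exact hrec k (by omega)
  refine ⟨P, (K + 1) ^ 2, α, by positivity, hα, ?_, ?_, ?_, ?_, ?_⟩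
  · -- idempotent
    intro m _
    ext ξ
    simp only [comp_apply]
    exact fixS m (P m ξ) (K * ‖ξ‖) (fun k hk => by rw [PS m ξ k hk]; exact sol_bd' _ _ _)
  · -- commutation
    intro m _
    ext ξ
    simp only [comp_apply]
    have hfix : P (m + 1) (A m (P m ξ)) = A m (P m ξ) := by
      have hAP : A m (P m ξ) = sol (m - 1) ξ (m + 1) := by
        have hs := sol_eq (m - 1) ξ m
        rw [if_neg (by omega), add_zero] at hs
        rw [hs, hP]
      apply fixS (m + 1) _ (K * ‖ξ‖)
      intro k hk
      have : Phi A k (m + 1) (sol (m - 1) ξ (m + 1)) = sol (m - 1) ξ k :=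
        Phi_sol A (sol (m - 1) ξ) hk
          (fun j h1 _ => by rw [sol_eq, if_neg (by omega), add_zero])
      rw [hAP, this]
      exact sol_bd' _ _ _
    have hkill : P (m + 1) (A m (ξ - P m ξ)) = 0 := by
      obtain ⟨x, hxm, hrec, hbd⟩ := resU m ξ
      have h0 : P m (x m) = 0 := by
        rw [hxm, map_sub]
        have : P m (P m ξ) = P m ξ :=
          fixS m (P m ξ) (K * ‖ξ‖) (fun k hk => by rw [PS m ξ k hk]; exact sol_bd' _ _ _)
        rw [this, sub_self]
      have := extU m (x m) h0
      rwa [hxm] at this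
    symm
    calc P (m + 1) (A m ξ)
        = P (m + 1) (A m (P m ξ + (ξ - P m ξ))) := by
          rw [show P m ξ + (ξ - P m ξ) = ξ by abel]
      _ = P (m + 1) (A m (P m ξ)) + P (m + 1) (A m (ξ - P m ξ)) := by
          rw [map_add, map_add]
      _ = A m (P m ξ) := by rw [hfix, hkill, add_zero]
  · -- bijectivity on kernels
    intro m _
    refine ⟨?_, ?_, ?_⟩
    · intro v hv
      exact extU m v hv
    · intro u hu v hv huv
      have hker : P m (u - v) = 0 := by
        rw [map_sub, hu, hv, sub_zero]
      obtain ⟨x, hxm, hrec, hbd⟩ := kerU m (u - v) hker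
      have hz := Huniq (fun k => if k ≤ m then x k else 0)
        ⟨(1 + K) * ‖u - v‖, ?_⟩ ?_
      · have := hz m
        simp only [if_pos le_rfl, hxm] at this
        exact sub_eq_zero.mp this
      · intro k
        by_cases hk : k ≤ m
        · simp only [if_pos hk]; exact hbd k hk
        · simp only [if_neg hk, norm_zero]
          positivity
      · intro k
        by_cases hk : k + 1 ≤ m
        · simp only [if_pos hk, if_pos (show k ≤ m by omega)]
          exact hrec k (by omega)
        · by_cases hk2 : k = m
          · subst hk2
            show (if k + 1 ≤ k then x (k + 1) else 0) = A k (if k ≤ k then x k else 0)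
            rw [if_neg (show ¬(k + 1 ≤ k) by omega), if_pos le_rfl, hxm, map_sub,
              huv, sub_self]
          · simp only [if_neg hk, if_neg (show ¬(k ≤ m) by omega), map_zero]
    · intro v hv
      obtain ⟨x, hxm, hrec, hbd⟩ := kerU (m + 1) v hv
      have hker : P m (x m) = 0 :=
        (killU m x ((1 + K) * ‖v‖) (fun k hk => hbd k (by omega))
          (fun k hk => hrec k (by omega))).1
      refine ⟨x m, hker, ?_⟩
      rw [← hrec m (by omega), hxm]
  · -- stable estimate
    intro k m _ _ hmk
    apply opNorm_le_bound _ (by positivity)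
    intro ξ
    rw [comp_apply, PS m ξ k hmk]
    have hb := sol_bd (m - 1) ξ k
    have habs : |(k : ℝ) - ((m - 1 : ℤ) : ℝ) - 1| = (k : ℝ) - m := by
      have h1 : (m : ℝ) ≤ (k : ℝ) := by exact_mod_cast hmk
      rw [abs_of_nonneg] <;> push_cast <;> linarith
    rw [habs] at hb
    refine le_trans hb ?_
    have he : (0:ℝ) < Real.exp (-α * ((k:ℝ) - m)) := Real.exp_pos _
    have hKK : K ≤ (K + 1) ^ 2 := by nlinarith
    exact mul_le_mul_of_nonneg_right
      (mul_le_mul_of_nonneg_right hKK he.le) (norm_nonneg ξ)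
  · -- unstable estimate
    intro m k _ _ hmk x y hx hphi
    obtain ⟨xt, hxtm, hrec, hbd⟩ := kerU m x hx
    set xh : ℤ → X := fun j => if j ≤ m then xt j else Phi A j m x with hxh
    have hxhm : xh m = x := by simp only [hxh, if_pos le_rfl, hxtm]
    have hxhk : xh k = y - P k y := by
      by_cases hkm : k ≤ m
      · have e : k = m := le_antisymm hkm hmk
        rw [e, hxhm]
        have := hphi
        rw [e, Phi_self] at this
        exact this
      · simp only [hxh, if_neg hkm]
        exact hphi
    have hrec2 : ∀ j, j < k → xh (j + 1) = A j (xh j) := by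
      intro j hj
      by_cases hj1 : j + 1 ≤ m
      · simp only [hxh, if_pos hj1, if_pos (show j ≤ m by omega)]
        exact hrec j (by omega)
      · by_cases hj2 : j ≤ m
        · have e : j = m := by omega
          simp only [hxh, if_neg hj1, if_pos hj2]
          rw [e, Phi_succ A le_rfl, Phi_self, hxtm]
        · simp only [hxh, if_neg hj1, if_neg hj2]
          exact Phi_succ A (by omega) x
    have hbd2 : ∀ j, j ≤ k → ‖xh j‖ ≤
        max ((1 + K) * ‖x‖) ((Finset.Icc m k).sup' (Finset.nonempty_Icc.mpr hmk)
          (fun j => ‖Phi A j m x‖)) := by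
      intro j hj
      by_cases hj1 : j ≤ m
      · simp only [hxh, if_pos hj1]
        exact le_trans (hbd j hj1) (le_max_left _ _)
      · simp only [hxh, if_neg hj1]
        refine le_trans (Finset.le_sup' (fun j => ‖Phi A j m x‖)
          (Finset.mem_Icc.mpr ⟨by omega, hj⟩)) (le_max_right _ _)
    have hkill := (killU k xh _ hbd2 hrec2).2
    have hPny : ‖y - P k y‖ ≤ (1 + K) * ‖y‖ := by
      refine le_trans (norm_sub_le _ _) ?_
      have := hPnorm k y
      linarith
    by_cases hmk1 : m ≤ k - 1
    · have h1 := hkill m hmk1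
      rw [hxhm, hxhk] at h1
      refine le_trans h1 ?_
      have he : (0:ℝ) < Real.exp (-α * ((k:ℝ) - m)) := Real.exp_pos _
      have hn := norm_nonneg y
      have h2 : K * Real.exp (-α * ((k:ℝ) - m)) * ‖y - P k y‖ ≤
          K * Real.exp (-α * ((k:ℝ) - m)) * ((1 + K) * ‖y‖) := by
        apply mul_le_mul_of_nonneg_left hPny
        positivity
      refine le_trans h2 ?_
      have hKK : K * (1 + K) ≤ (K + 1) ^ 2 := by nlinarith
      calc K * Real.exp (-α * ((k:ℝ) - m)) * ((1 + K) * ‖y‖)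
          = (K * (1 + K)) * (Real.exp (-α * ((k:ℝ) - m)) * ‖y‖) := by ring
        _ ≤ (K + 1) ^ 2 * (Real.exp (-α * ((k:ℝ) - m)) * ‖y‖) :=
            mul_le_mul_of_nonneg_right hKK (by positivity)
        _ = (K + 1) ^ 2 * Real.exp (-α * ((k:ℝ) - m)) * ‖y‖ := by ring
    · have e : m = k := by omega
      have h1 : ‖x‖ ≤ (1 + K) * ‖y‖ := by
        rw [← hxhm, e, hxhk]
        exact hPny
      refine le_trans h1 ?_
      have he : (0:ℝ) < Real.exp (-α * ((k:ℝ) - m)) := Real.exp_pos _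
      have he2 : Real.exp (-α * ((k:ℝ) - m)) = 1 := by
        rw [e]; norm_num
      rw [he2]
      have hKK : 1 + K ≤ (K + 1) ^ 2 := by nlinarith
      have hn := norm_nonneg y
      calc (1 + K) * ‖y‖ ≤ (K + 1) ^ 2 * ‖y‖ :=
            mul_le_mul_of_nonneg_right hKK hn
        _ = (K + 1) ^ 2 * 1 * ‖y‖ := by ring

end AuxLemmas

theorem diagonal_dichotomy_iff_no_bounded_solutions_Z {H1 : Type u} {H2 : Type u}
    [NormedAddCommGroup H1] [InnerProductSpace ℝ H1] [CompleteSpace H1]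
    [NormedAddCommGroup H2] [InnerProductSpace ℝ H2] [CompleteSpace H2]
    (A11 : ℤ → H1 →L[ℝ] H1) (A12 : ℤ → H2 →L[ℝ] H1) (A22 : ℤ → H2 →L[ℝ] H2)
    (htri : ExpDichotomy (Set.univ : Set ℤ) Set.univ (triangular A11 A12 A22)) :
    ExpDichotomy (Set.univ : Set ℤ) Set.univ (diagonal A11 A22) ↔
      (∀ x2 : ℤ → H2, (∃ C : ℝ, ∀ n : ℤ, ‖x2 n‖ ≤ C) →
        (∀ n : ℤ, x2 (n + 1) = A22 n (x2 n)) → ∀ n : ℤ, x2 n = 0) := by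
  constructor
  · -- dichotomy of the diagonal system kills bounded solutions of the A22 system
    rintro ⟨Pd, hPd⟩ x2 ⟨C, hC⟩ hx2 n
    have hz := bounded_solution_eq_zero (diagonal A11 A22) Pd hPd
      (fun k => (((0 : H1), x2 k) : H1 × H2)) (max C 0) ?_ ?_
    · have h1 : (((0 : H1), x2 n) : H1 × H2) = 0 := hz n
      have h2 : x2 n = (((0 : H1), x2 n) : H1 × H2).2 := rfl
      rw [h2, h1]
      rfl
    · intro k
      rw [Prod.norm_def]
      simp only [norm_zero]
      refine max_le (le_max_right _ _) ?_
      exact le_trans (hC k) (le_max_left _ _)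
    · intro k
      show (((0 : H1), x2 (k + 1)) : H1 × H2) = (A11 k).prodMap (A22 k) (0, x2 k)
      have hpm : (A11 k).prodMap (A22 k) (((0 : H1), x2 k) : H1 × H2) =
          (A11 k 0, A22 k (x2 k)) := rfl
      rw [hpm, map_zero, ← hx2 k]
  · -- no bounded solutions ⟹ dichotomy of the diagonal system
    intro Hb
    obtain ⟨Q, K, α, hK, hα, h3, h4, h5, h6, h7⟩ := htri
    set T := triangular A11 A12 A22 with hT
    have hTfst : ∀ (k : ℤ) (v : H1 × H2), (T k v).1 = A11 k v.1 + A12 k v.2 := fun k v => rfl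
    have hTsnd : ∀ (k : ℤ) (v : H1 × H2), (T k v).2 = A22 k v.2 := fun k v => rfl
    have hexp1 : ∀ r : ℝ, Real.exp (-α * |r|) ≤ 1 := by
      intro r
      rw [show (1 : ℝ) = Real.exp 0 by simp]
      apply Real.exp_le_exp.mpr
      have := abs_nonneg r
      nlinarith
    -- δ-solutions for the triangular system
    have HdT := exists_delta_sol T Q K α (fun n => h3 n trivial) (fun n => h5 n trivial)
      (fun m n h => h6 m n trivial trivial h) (fun m n h => h7 m n trivial trivial h)
    -- δ-solutions for the diagonal system
    have HdD : ∀ (n : ℤ) (ξ : H1 × H2), ∃ y : ℤ → H1 × H2,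
        (∀ k, y (k + 1) = diagonal A11 A22 k (y k) + (if k = n then ξ else 0)) ∧
        ∀ k, ‖y k‖ ≤ K * Real.exp (-α * |(k : ℝ) - n - 1|) * ‖ξ‖ := by
      intro n ξ
      obtain ⟨yA, hyA, hyAb⟩ := HdT n (ξ.1, 0)
      obtain ⟨yB, hyB, hyBb⟩ := HdT n (0, ξ.2)
      have hb10 : ‖((ξ.1, 0) : H1 × H2)‖ ≤ ‖ξ‖ := by
        rw [Prod.norm_def, Prod.norm_def]
        simp only [norm_zero]
        exact max_le (le_max_left _ _) (le_trans (norm_nonneg _) (le_max_left _ _))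
      have hb02 : ‖((0, ξ.2) : H1 × H2)‖ ≤ ‖ξ‖ := by
        rw [Prod.norm_def, Prod.norm_def]
        simp only [norm_zero]
        exact max_le (le_trans (norm_nonneg _) (le_max_right _ _)) (le_max_right _ _)
      -- the second component of yA is a bounded solution of the A22 system
      have hA2 : ∀ k, (yA k).2 = 0 := by
        apply Hb (fun k => (yA k).2)
        · refine ⟨K * ‖((ξ.1, 0) : H1 × H2)‖, fun k => ?_⟩
          refine le_trans (norm_snd_le _) (le_trans (hyAb k) ?_)
          calc K * Real.exp (-α * |(k : ℝ) - n - 1|) * ‖((ξ.1, 0) : H1 × H2)‖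
              ≤ K * 1 * ‖((ξ.1, 0) : H1 × H2)‖ := by
                apply mul_le_mul_of_nonneg_right _ (norm_nonneg _)
                exact mul_le_mul_of_nonneg_left (hexp1 _) hK.le
            _ = K * ‖((ξ.1, 0) : H1 × H2)‖ := by ring
        · intro k
          have h := congrArg Prod.snd (hyA k)
          rw [Prod.snd_add, hTsnd] at h
          have hz : (if k = n then ((ξ.1, 0) : H1 × H2) else 0).2 = 0 := by
            split_ifs <;> rfl
          rw [hz, add_zero] at h
          exact h
      refine ⟨fun k => ((yA k).1, (yB k).2), ?_, ?_⟩
      · intro k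
        have h1 := congrArg Prod.fst (hyA k)
        rw [Prod.fst_add, hTfst, hA2 k, map_zero, add_zero] at h1
        have h2 := congrArg Prod.snd (hyB k)
        rw [Prod.snd_add, hTsnd] at h2
        have e1 : (if k = n then ((ξ.1, 0) : H1 × H2) else 0).1 =
            (if k = n then ξ else 0).1 := by
          split_ifs <;> rfl
        have e2 : (if k = n then ((0, ξ.2) : H1 × H2) else 0).2 =
            (if k = n then ξ else 0).2 := by
          split_ifs <;> rfl
        rw [e1] at h1
        rw [e2] at h2
        show ((yA (k + 1)).1, (yB (k + 1)).2) =
          (A11 k).prodMap (A22 k) ((yA k).1, (yB k).2) + (if k = n then ξ else 0)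
        have hpm : (A11 k).prodMap (A22 k) (((yA k).1, (yB k).2) : H1 × H2) =
            (A11 k (yA k).1, A22 k (yB k).2) := rfl
        rw [hpm, Prod.ext_iff]
        constructor
        · rw [Prod.fst_add]
          exact h1
        · rw [Prod.snd_add]
          exact h2
      · intro k
        show ‖(((yA k).1, (yB k).2) : H1 × H2)‖ ≤
          K * Real.exp (-α * |(k : ℝ) - n - 1|) * ‖ξ‖
        rw [Prod.norm_def]
        have hpos : 0 ≤ K * Real.exp (-α * |(k : ℝ) - n - 1|) := by positivity
        refine max_le ?_ ?_
        · exact le_trans (norm_fst_le (yA k)) (le_trans (hyAb k)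
            (mul_le_mul_of_nonneg_left hb10 hpos))
        · exact le_trans (norm_snd_le (yB k)) (le_trans (hyBb k)
            (mul_le_mul_of_nonneg_left hb02 hpos))
    -- uniqueness of bounded solutions for the diagonal system
    have HuD : ∀ x : ℤ → H1 × H2, (∃ C : ℝ, ∀ n, ‖x n‖ ≤ C) →
        (∀ n, x (n + 1) = diagonal A11 A22 n (x n)) → ∀ n, x n = 0 := by
      rintro x ⟨C, hC⟩ hx n
      have hx2 : ∀ k, (x k).2 = 0 := by
        apply Hb (fun k => (x k).2)
        · exact ⟨C, fun k => le_trans (norm_snd_le _) (hC k)⟩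
        · intro k
          have h := congrArg Prod.snd (hx k)
          rw [h]
          rfl
      have hx1 : ∀ k, (x k).1 = 0 := by
        have hz := bounded_solution_eq_zero T Q ⟨K, α, hK, hα, h3, h4, h5, h6, h7⟩
          (fun k => (((x k).1, 0) : H1 × H2)) C ?_ ?_
        · intro k
          have h := congrArg Prod.fst (hz k)
          rw [h]
          rfl
        · intro k
          rw [Prod.norm_def]
          simp only [norm_zero]
          exact max_le (le_trans (norm_fst_le _) (hC k))
            (le_trans (norm_nonneg _) (le_trans (norm_fst_le (x k)) (hC k)))
        · intro k
          have h1 : (x (k + 1)).1 = A11 k (x k).1 := by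
            rw [congrArg Prod.fst (hx k)]
            rfl
          rw [Prod.ext_iff]
          constructor
          · rw [hTfst]
            show (x (k + 1)).1 = A11 k (x k).1 + A12 k (0 : H2)
            rw [map_zero, add_zero, h1]
          · rw [hTsnd]
            show (0 : H2) = A22 k (0 : H2)
            rw [map_zero]
      have he : x n = ((x n).1, (x n).2) := rfl
      rw [he, hx1 n, hx2 n]
      rfl
    exact perron (diagonal A11 A22) K α hK hα HdD HuD

end
end

section
/- Let X be a Banach space and (A(n))_{n∈Z+} a sequence of bounded linear operators on X with cocycle Φ. Suppose that: (a) for every bounded sequence (y(n))_{n∈Z+} in X there exists a bounded sequence (x(n))_{n∈Z+} in X with x(n+1) = A(n)x(n) + y(n) for all n ∈ Z+; and (b) the subspace S := {v ∈ X : sup_{n∈Z+} ‖Φ(n,0)v‖ < +∞} (not assumed closed) admits a closed subspace Z of X with X = S ⊕ Z. Then the system x(n+1) = A(n)x(n) admits an exponential dichotomy on Z+ (and in particular S is closed). -/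
open Real ContinuousLinearMap

noncomputable section

universe u

variable {X : Type u} [NormedAddCommGroup X] [NormedSpace ℝ X]

variable {X1 : Type u} {X2 : Type u} [NormedAddCommGroup X1] [NormedSpace ℝ X1]
  [NormedAddCommGroup X2] [NormedSpace ℝ X2]

/-!
Let `Z` be a closed complement of the space `S` of initial values of bounded solutions. For
bounded `y`, the bounded solution of `x (n + 1) = A n (x n) + y n` with `x 0 ∈ Z` exists by
admissibility and is unique as `S ∩ Z = 0`; its graph is closed in `ℓ^∞ × ℓ^∞`, so the open
mapping theorem bounds it by `c ‖y‖`.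

For a homogeneous solution `u` and a scalar weight `φ`, `φ • u` is the solution forced by
`(φ (n + 1) - φ n) • u (n + 1)`. Taking for `φ` a step function, and then the partial sums of
`‖u t‖⁻¹`, the bound gives `(m - j + 1) ‖u m‖ ≤ C ‖u j‖` for bounded solutions and, backwards in
time, for solutions starting in `Z`; linear decay with a uniform constant iterates to exponential
decay.

`P n` projects along `Φ(n, 0) Z` onto the space `S(n)` of initial values at time `n` of bounded
solutions. For `n ≥ 1` the splitting of `v` is read off the bounded solution forced by the impulse
`v` at time `n - 1`, which also bounds `‖P n‖` by `c`; `P 0` is continuous because `S` is closed,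
as the uniform bound `‖Φ(m, n) v‖ ≤ C ‖v‖` on `S(n)` shows.
-/

theorem exists_forall_le_of_eq_zero {f : ℕ → ℝ} {m : ℕ} (hf : ∀ i, m ≤ i → f i = 0) :
    ∃ C, ∀ i, f i ≤ C := by
  obtain ⟨D, hD⟩ := ((Set.finite_Iio m).image f).bddAbove
  refine ⟨max D 0, fun i => ?_⟩
  rcases lt_or_ge i m with him | hmi
  · exact le_max_of_le_left (hD ⟨i, him, rfl⟩)
  · exact (hf i hmi).trans_le (le_max_right _ _)

theorem card_mul_le_mul_sum_inv_mul {ι : Type*} (s : Finset ι) {a : ι → ℝ} {B w : ℝ}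
    (hw : 0 ≤ w) (ha : ∀ t ∈ s, 0 ≤ a t) (haB : ∀ t ∈ s, a t ≤ B)
    (hzero : ∀ t ∈ s, a t = 0 → w = 0) :
    (s.card : ℝ) * w ≤ B * (∑ t ∈ s, (a t)⁻¹) * w := by
  rw [Finset.mul_sum, Finset.sum_mul, Finset.card_eq_sum_ones, Nat.cast_sum, Finset.sum_mul]
  refine Finset.sum_le_sum fun t ht => ?_
  rcases (ha t ht).eq_or_lt with h | h
  · simp [hzero t ht h.symm]
  · have : 1 ≤ B * (a t)⁻¹ := by rw [← div_eq_mul_inv, le_div_iff₀ h]; simpa using haB t ht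
    nlinarith

theorem sum_ite_le_succ_sub_sum_ite_le (s : Finset ℕ) (f : ℕ → ℝ) (i : ℕ) :
    ((∑ t ∈ s, if t ≤ i + 1 then f t else 0) - ∑ t ∈ s, if t ≤ i then f t else 0) =
      if i + 1 ∈ s then f (i + 1) else 0 := by
  rw [← Finset.sum_sub_distrib, ← Finset.sum_ite_eq' s (i + 1) f]
  refine Finset.sum_congr rfl fun t _ => ?_
  by_cases h : t = i + 1
  · simp [h]
  · rw [if_neg h]; split_ifs <;> first | (exfalso; omega) | ring

theorem le_exp_neg_mul_of_le_exp_neg_one {g : ℕ → ℝ} {j m N : ℕ}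
    (hstep : ∀ a, j ≤ a → a + N ≤ m → g (a + N) ≤ exp (-1) * g a) (q : ℕ) (hq : j + q * N ≤ m) :
    g (j + q * N) ≤ exp (-q) * g j := by
  induction q with
  | zero => simp
  | succ q ih =>
    calc g (j + (q + 1) * N) = g (j + q * N + N) := by rw [Nat.succ_mul, add_assoc]
      _ ≤ exp (-1) * (exp (-q) * g j) :=
        (hstep _ (by omega) (by rw [add_assoc, ← Nat.succ_mul]; exact hq)).trans
          (by gcongr; exact ih (by nlinarith))
      _ = exp (-(q + 1 : ℕ)) * g j := by rw [← mul_assoc, ← exp_add]; push_cast; ring_nf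

theorem exists_exp_decay_of_linear_decay {C : ℝ} (hC : 0 < C) : ∃ K α : ℝ, 0 < K ∧ 0 < α ∧
    ∀ (g : ℕ → ℝ) (j m : ℕ), (∀ t, 0 ≤ g t) → j ≤ m →
      (∀ a b, j ≤ a → a ≤ b → b ≤ m → ((b : ℝ) - a + 1) * g b ≤ C * g a) →
      g m ≤ K * exp (-α * ((m : ℝ) - j)) * g j := by
  -- after `N` steps the linear bound `C / (N + 1)` is below `exp (-1)`
  set N : ℕ := ⌈C * exp 1⌉₊
  have hCN : C * exp 1 ≤ N := Nat.le_ceil _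
  have hN : (0 : ℝ) < N := (mul_pos hC (exp_pos 1)).trans_le hCN
  refine ⟨C * exp 1, 1 / N, by positivity, by positivity, fun g j m hg hjm H => ?_⟩
  have hmono : ∀ a, j ≤ a → a ≤ m → g m ≤ C * g a := fun a hja ham => by
    have h := H a m hja ham le_rfl
    have : (1 : ℝ) ≤ m - a + 1 := by linarith [(Nat.cast_le (α := ℝ)).2 ham]
    nlinarith [hg m]
  have hstep : ∀ a, j ≤ a → a + N ≤ m → g (a + N) ≤ exp (-1) * g a := fun a hja ham => by
    have h := H a (a + N) hja (by omega) ham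
    rw [show ((a + N : ℕ) : ℝ) - a + 1 = N + 1 by push_cast; ring] at h
    have hC' : C ≤ (N + 1) * exp (-1) := by
      rw [exp_neg, ← div_eq_mul_inv, le_div_iff₀ (exp_pos 1)]; linarith
    have := h.trans (mul_le_mul_of_nonneg_right hC' (hg a))
    rw [mul_assoc] at this
    exact le_of_mul_le_mul_left this (by positivity)
  obtain ⟨q, r, hr, hmj⟩ : ∃ q r, r < N ∧ m - j = q * N + r :=
    ⟨(m - j) / N, (m - j) % N, Nat.mod_lt _ (by exact_mod_cast hN), (Nat.div_add_mod' _ _).symm⟩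
  have hq : j + q * N ≤ m := by omega
  have hexp : exp (-q) ≤ exp 1 * exp (-(1 / N) * ((m : ℝ) - j)) := by
    have hmj' : (m : ℝ) - j = q * N + r := by
      rw [← Nat.cast_sub hjm, hmj]; push_cast; ring
    have hrN : (r : ℝ) / N ≤ 1 := (div_lt_one hN).2 (by exact_mod_cast hr) |>.le
    have : -(1 / N) * ((m : ℝ) - j) = -q - r / N := by rw [hmj']; field_simp; ring
    rw [← exp_add, exp_le_exp, this]
    linarith
  calc g m ≤ C * g (j + q * N) := hmono _ (by omega) hq
    _ ≤ C * (exp (-q) * g j) := by gcongr; exact le_exp_neg_mul_of_le_exp_neg_one hstep q hq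
    _ ≤ C * (exp 1 * exp (-(1 / N) * ((m : ℝ) - j)) * g j) := by gcongr; exact hg j
    _ = C * exp 1 * exp (-(1 / N) * ((m : ℝ) - j)) * g j := by ring

section Cocycle

variable (A : ℤ → X →L[ℝ] X)

theorem phi_self (n : ℤ) : Phi A n n = ContinuousLinearMap.id ℝ X := by
  simp [Phi, cocycleAux]

theorem phi_succ {m n : ℤ} (h : n ≤ m) : Phi A (m + 1) n = (A m).comp (Phi A m n) := by
  have hk : (m + 1 - n).toNat = (m - n).toNat + 1 := by omega
  rw [Phi, hk, cocycleAux, Phi]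
  congr 2
  omega

theorem phi_natCast_succ_apply {i j : ℕ} (h : j ≤ i) (v : X) :
    Phi A (i + 1 : ℕ) j v = A i (Phi A i j v) := by
  rw [Nat.cast_succ, phi_succ A (Nat.cast_le.2 h), comp_apply]

theorem phi_natCast_succ_self_apply (n : ℕ) (v : X) : Phi A (n + 1 : ℕ) n v = A n v := by
  simpa [phi_self] using phi_natCast_succ_apply A le_rfl v

theorem phi_comp_apply {k m n : ℤ} (hnk : n ≤ k) (hkm : k ≤ m) (v : X) :
    Phi A m k (Phi A k n v) = Phi A m n v := by
  induction m, hkm using Int.leInduction with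
  | base => simp [phi_self]
  | succ m hkm ih => rw [phi_succ A hkm, phi_succ A (hnk.trans hkm), comp_apply, comp_apply, ih]

theorem eq_phi_of_succ_eq {u : ℕ → X} {n m : ℕ} (hnm : n ≤ m)
    (hu : ∀ i, n ≤ i → i < m → u (i + 1) = A i (u i)) : u m = Phi A m n (u n) := by
  induction m, hnm using Nat.le_induction with
  | base => simp [phi_self]
  | succ m hnm ih =>
    rw [hu m hnm m.lt_succ_self, ih fun i hi him => hu i hi (him.trans m.lt_succ_self),
      Nat.cast_succ, phi_succ A (by exact_mod_cast hnm), comp_apply]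

end Cocycle

section StableSubspace

variable (A : ℤ → X →L[ℝ] X)

def stableSubspace (n : ℕ) : Submodule ℝ X where
  carrier := {v | ∃ C, ∀ m : ℕ, n ≤ m → ‖Phi A m n v‖ ≤ C}
  zero_mem' := ⟨0, fun m _ => by simp⟩
  add_mem' := by
    rintro v w ⟨C, hC⟩ ⟨D, hD⟩
    exact ⟨C + D, fun m hm => by
      rw [map_add]; exact (norm_add_le _ _).trans (add_le_add (hC m hm) (hD m hm))⟩
  smul_mem' := by
    rintro r v ⟨C, hC⟩
    exact ⟨‖r‖ * C, fun m hm => by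
      rw [map_smul, norm_smul]; exact mul_le_mul_of_nonneg_left (hC m hm) (norm_nonneg r)⟩

variable {A}

theorem coe_stableSubspace_zero : (stableSubspace A 0 : Set X) = Sset A := by
  ext v
  constructor
  · rintro ⟨C, hC⟩
    refine ⟨C, fun n hn => ?_⟩
    lift n to ℕ using hn
    exact_mod_cast hC n n.zero_le
  · rintro ⟨C, hC⟩
    exact ⟨C, fun m _ => by exact_mod_cast hC m m.cast_nonneg⟩

theorem phi_mem_stableSubspace_iff {k n : ℕ} (hkn : k ≤ n) {v : X} :
    Phi A n k v ∈ stableSubspace A n ↔ v ∈ stableSubspace A k := by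
  constructor
  · rintro ⟨C, hC⟩
    obtain ⟨D, hD⟩ := ((Set.finite_Iio n).image fun m : ℕ => ‖Phi A m k v‖).bddAbove
    refine ⟨max C D, fun m hkm => ?_⟩
    rcases lt_or_ge m n with hmn | hnm
    · exact le_max_of_le_right (hD ⟨m, hmn, rfl⟩)
    · rw [← phi_comp_apply A (Nat.cast_le.2 hkn) (Nat.cast_le.2 hnm)]
      exact le_max_of_le_left (hC m hnm)
  · rintro ⟨C, hC⟩
    exact ⟨C, fun m hnm => by
      rw [phi_comp_apply A (Nat.cast_le.2 hkn) (Nat.cast_le.2 hnm)]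
      exact hC m (hkn.trans hnm)⟩

theorem mem_stableSubspace_of_succ_eq {x : ℕ → X} {n : ℕ} (hx : ∃ C, ∀ m, ‖x m‖ ≤ C)
    (hrec : ∀ m, n ≤ m → x (m + 1) = A m (x m)) : x n ∈ stableSubspace A n := by
  obtain ⟨C, hC⟩ := hx
  exact ⟨C, fun m hnm => by
    rw [← eq_phi_of_succ_eq A hnm fun i hi _ => hrec i hi]; exact hC m⟩

end StableSubspace

def HasBoundedSolutions (A : ℤ → X →L[ℝ] X) (Z : Set X) : Prop :=
  ∀ y : ℕ → X, (∃ C, ∀ n, ‖y n‖ ≤ C) →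
    ∃ x : ℕ → X, x 0 ∈ Z ∧ (∃ C, ∀ n, ‖x n‖ ≤ C) ∧ ∀ n : ℕ, x (n + 1) = A n (x n) + y n

section Solutions

variable {A : ℤ → X →L[ℝ] X} {Z : Submodule ℝ X}

theorem hasBoundedSolutions_of_codisjoint
    (hadm : ∀ y : ℤ → X, (∃ C : ℝ, ∀ n : ℤ, 0 ≤ n → ‖y n‖ ≤ C) →
      ∃ x : ℤ → X, (∃ C : ℝ, ∀ n : ℤ, 0 ≤ n → ‖x n‖ ≤ C) ∧
        ∀ n : ℤ, 0 ≤ n → x (n + 1) = A n (x n) + y n)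
    (hZ : Codisjoint (stableSubspace A 0) Z) : HasBoundedSolutions A Z := by
  rintro y ⟨Cy, hCy⟩
  obtain ⟨x, ⟨Cx, hCx⟩, hx⟩ := hadm (fun n => y n.toNat) ⟨Cy, fun n _ => hCy n.toNat⟩
  obtain ⟨s, z, ⟨Cs, hCs⟩, hz, hsz⟩ := Submodule.codisjoint_iff_exists_add_eq.1 hZ (x 0)
  -- subtracting the bounded homogeneous solution through `s` moves the initial value into `Z`
  refine ⟨fun n => x n - Phi A n 0 s, ?_, ⟨Cx + Cs, fun n => ?_⟩, fun n => ?_⟩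
  · simpa [phi_self, ← hsz] using hz
  · exact (norm_sub_le _ _).trans (add_le_add (hCx n n.cast_nonneg) (hCs n n.zero_le))
  · simp only [Nat.cast_succ, hx n n.cast_nonneg, Int.toNat_natCast,
      phi_succ A (Nat.cast_nonneg n), comp_apply, map_sub]
    abel

theorem eq_zero_of_bounded_of_succ_eq (hZ : Disjoint (stableSubspace A 0) Z) {x : ℕ → X}
    (h0 : x 0 ∈ Z) (hx : ∃ C, ∀ n, ‖x n‖ ≤ C) (hrec : ∀ n : ℕ, x (n + 1) = A n (x n)) :
    x = 0 := by
  have hS : x 0 ∈ stableSubspace A 0 := mem_stableSubspace_of_succ_eq hx fun m _ => hrec m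
  have hx0 : x 0 = 0 := Submodule.disjoint_def.1 hZ _ hS h0
  funext n
  rw [eq_phi_of_succ_eq A n.zero_le fun i _ _ => hrec i, hx0, map_zero, Pi.zero_apply]

end Solutions

def IsSolutionBound (A : ℤ → X →L[ℝ] X) (Z : Set X) (c : ℝ) : Prop :=
  ∀ ⦃x y : ℕ → X⦄ ⦃M : ℝ⦄, x 0 ∈ Z → (∀ n : ℕ, x (n + 1) = A n (x n) + y n) →
    (∃ C, ∀ n, ‖x n‖ ≤ C) → (∀ n, ‖y n‖ ≤ M) → ∀ n, ‖x n‖ ≤ c * M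

section SolutionBound

open BoundedContinuousFunction

variable {A : ℤ → X →L[ℝ] X} {Z : Submodule ℝ X}

variable (A Z) in
def solutionGraph : Submodule ℝ ((ℕ →ᵇ X) × (ℕ →ᵇ X)) where
  carrier := {p | p.2 0 ∈ Z ∧ ∀ n : ℕ, p.2 (n + 1) = A n (p.2 n) + p.1 n}
  add_mem' := by
    rintro p q ⟨hp0, hp⟩ ⟨hq0, hq⟩
    refine ⟨Z.add_mem hp0 hq0, fun n => ?_⟩
    simp only [Prod.fst_add, Prod.snd_add, coe_add, Pi.add_apply, hp, hq, map_add]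
    abel
  zero_mem' := ⟨Z.zero_mem, fun n => by simp⟩
  smul_mem' := by
    rintro r p ⟨hp0, hp⟩
    refine ⟨Z.smul_mem r hp0, fun n => ?_⟩
    simp only [Prod.smul_fst, Prod.smul_snd, coe_smul, hp, map_smul, smul_add]

theorem isClosed_solutionGraph (hZ : IsClosed (Z : Set X)) :
    IsClosed (solutionGraph A Z : Set ((ℕ →ᵇ X) × (ℕ →ᵇ X))) := by
  have hev : ∀ n : ℕ, Continuous fun f : ℕ →ᵇ X => f n := fun n => continuous_eval_const n
  show IsClosed {p : (ℕ →ᵇ X) × (ℕ →ᵇ X) | p.2 0 ∈ Z ∧ ∀ n : ℕ, _}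
  rw [Set.ofPred_and, Set.ofPred_forall]
  refine (hZ.preimage ((hev 0).comp continuous_snd)).inter (isClosed_iInter fun n => ?_)
  exact isClosed_eq ((hev (n + 1)).comp continuous_snd)
    (((A n).continuous.comp ((hev n).comp continuous_snd)).add ((hev n).comp continuous_fst))

theorem exists_isSolutionBound [CompleteSpace X] (hZc : IsClosed (Z : Set X))
    (hZ : Disjoint (stableSubspace A 0) Z)
    (hsol : HasBoundedSolutions A Z) :
    ∃ c, 1 ≤ c ∧ IsSolutionBound A Z c := by
  have := (isClosed_solutionGraph (A := A) hZc).completeSpace_coe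
  let f := (ContinuousLinearMap.fst ℝ _ _).comp (solutionGraph A Z).subtypeL
  have hf : Function.Surjective f := by
    intro y
    obtain ⟨x, hx0, ⟨C, hC⟩, hx⟩ := hsol y ⟨‖y‖, y.norm_coe_le_norm⟩
    exact ⟨⟨(y, ofNormedAddCommGroupDiscrete x C hC), hx0, hx⟩, rfl⟩
  obtain ⟨C, -, hC⟩ := f.exists_preimage_norm_le hf
  refine ⟨max C 1, le_max_right _ _, fun x y M hx0 hx hxb hy n => ?_⟩
  have hM : 0 ≤ M := (norm_nonneg _).trans (hy 0)
  set yb := ofNormedAddCommGroupDiscrete y M hy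
  obtain ⟨⟨⟨y', x'⟩, hx'0, hx'⟩, rfl : y' = yb, hp⟩ := hC yb
  have hxx' : (fun n => x n - x' n) = 0 := by
    refine eq_zero_of_bounded_of_succ_eq hZ (Z.sub_mem hx0 hx'0) ?_ fun n => ?_
    · obtain ⟨D, hD⟩ := hxb
      exact ⟨D + ‖x'‖, fun n => (norm_sub_le _ _).trans (add_le_add (hD n) (x'.norm_coe_le_norm n))⟩
    · simp only [hx, hx', map_sub, yb, coe_ofNormedAddCommGroupDiscrete]
      abel
  calc ‖x n‖ = ‖x' n‖ := by rw [sub_eq_zero.1 (congrFun hxx' n)]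
    _ ≤ ‖((yb, x') : (ℕ →ᵇ X) × (ℕ →ᵇ X))‖ := (x'.norm_coe_le_norm n).trans (norm_snd_le (yb, x'))
    _ ≤ C * ‖yb‖ := hp
    _ ≤ max C 1 * M := by
      gcongr
      · exact le_max_left _ _
      · exact norm_ofNormedAddCommGroup_le _ hM hy

end SolutionBound

namespace IsSolutionBound

variable {A : ℤ → X →L[ℝ] X} {Z : Submodule ℝ X} {c : ℝ}

theorem abs_mul_norm_le (hc : IsSolutionBound A Z c) {u : ℕ → X} {φ : ℕ → ℝ}
    (hu : ∀ i, φ i ≠ 0 → u (i + 1) = A i (u i)) (h0 : φ 0 • u 0 ∈ Z)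
    (hbdd : ∃ C, ∀ i, |φ i| * ‖u i‖ ≤ C) {M : ℝ}
    (hM : ∀ i, |φ (i + 1) - φ i| * ‖u (i + 1)‖ ≤ M) (i : ℕ) :
    |φ i| * ‖u i‖ ≤ c * M := by
  have hrec : ∀ i : ℕ, φ (i + 1) • u (i + 1) = A i (φ i • u i) + (φ (i + 1) - φ i) • u (i + 1) := by
    intro i
    by_cases h : φ i = 0
    · simp [h]
    · rw [map_smul, ← hu i h]
      module
  simpa only [norm_smul, Real.norm_eq_abs] using
    hc (x := fun i => φ i • u i) h0 hrec (by simpa only [norm_smul, Real.norm_eq_abs] using hbdd)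
      (by simpa only [norm_smul, Real.norm_eq_abs] using hM) i

theorem norm_phi_le_of_mem_stableSubspace_of_pos (hc : IsSolutionBound A Z c) {j m : ℕ} (hj : 0 < j)
    (hjm : j ≤ m) {v : X} (hv : v ∈ stableSubspace A j) : ‖Phi A m j v‖ ≤ c * ‖v‖ := by
  obtain ⟨C, hC⟩ := hv
  have key := hc.abs_mul_norm_le (u := fun i => Phi A i j v) (φ := fun i => if j ≤ i then 1 else 0)
    (fun i hi => phi_natCast_succ_apply A (by simpa using hi) v) (by simp [show ¬j ≤ 0 by omega])
    ⟨max C 0, fun i => by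
      split_ifs with h
      · rw [abs_one, one_mul]; exact le_max_of_le_left (hC i h)
      · simp⟩
    (M := ‖v‖) (fun i => by
      by_cases h : i + 1 = j
      · simp [h, phi_self, show ¬j ≤ i by omega]
      · have : (j ≤ i + 1) = (j ≤ i) := by apply propext; omega
        simp [this]) m
  simpa [hjm] using key

theorem sum_inv_norm_mul_norm_phi_le_of_mem_stableSubspace (hc : IsSolutionBound A Z c)
    {j : ℕ} (hj : 0 < j) (m : ℕ) {v : X} (hv : v ∈ stableSubspace A j) :
    (∑ t ∈ Finset.Icc j m, ‖Phi A t j v‖⁻¹) * ‖Phi A m j v‖ ≤ c := by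
  set u : ℕ → X := fun i => Phi A i j v
  obtain ⟨C, hC⟩ := hv
  set φ : ℕ → ℝ := fun i => ∑ t ∈ Finset.Icc j m, if t ≤ i then ‖u t‖⁻¹ else 0
  have hφ_nonneg : ∀ i, 0 ≤ φ i := fun i => Finset.sum_nonneg fun t _ => by positivity
  have hφ_le : ∀ i, φ i ≤ ∑ t ∈ Finset.Icc j m, ‖u t‖⁻¹ := fun i =>
    Finset.sum_le_sum fun t _ => by split_ifs <;> [exact le_rfl; positivity]
  have hφ_zero : ∀ i, i < j → φ i = 0 := fun i hi =>
    Finset.sum_eq_zero fun t ht => if_neg (by rw [Finset.mem_Icc] at ht; omega)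
  have hφm : φ m = ∑ t ∈ Finset.Icc j m, ‖u t‖⁻¹ :=
    Finset.sum_congr rfl fun t ht => if_pos (Finset.mem_Icc.1 ht).2
  have key := hc.abs_mul_norm_le (u := u) (φ := φ) (M := 1)
    (fun i hi => phi_natCast_succ_apply A (not_lt.1 fun h => hi (hφ_zero i h)) v)
    (by simp [hφ_zero 0 hj]) ⟨(∑ t ∈ Finset.Icc j m, ‖u t‖⁻¹) * max C 0, fun i => by
      rw [abs_of_nonneg (hφ_nonneg i)]
      rcases lt_or_ge i j with hij | hji
      · rw [hφ_zero i hij, zero_mul]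
        exact mul_nonneg ((hφ_nonneg i).trans (hφ_le i)) (le_max_right _ _)
      · exact mul_le_mul (hφ_le i) (le_max_of_le_left (hC i hji)) (norm_nonneg _)
          ((hφ_nonneg i).trans (hφ_le i))⟩
    (fun i => by
      rw [sum_ite_le_succ_sub_sum_ite_le]
      split_ifs
      · rw [abs_of_nonneg (by positivity)]; exact inv_mul_le_one
      · simp) m
  rwa [abs_of_nonneg (hφ_nonneg m), mul_one, hφm] at key

theorem mul_norm_phi_le_of_mem_stableSubspace_of_pos (hc : IsSolutionBound A Z c) (hc1 : 1 ≤ c)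
    {j m : ℕ} (hj : 0 < j) (hjm : j ≤ m) {v : X} (hv : v ∈ stableSubspace A j) :
    ((m : ℝ) - j + 1) * ‖Phi A m j v‖ ≤ c ^ 2 * ‖v‖ := by
  have hcard := card_mul_le_mul_sum_inv_mul (Finset.Icc j m) (a := fun t => ‖Phi A t j v‖)
    (B := c * ‖v‖) (norm_nonneg (Phi A m j v)) (fun t _ => norm_nonneg _)
    (fun t ht => hc.norm_phi_le_of_mem_stableSubspace_of_pos hj (Finset.mem_Icc.1 ht).1 hv)
    (fun t ht h => by
      obtain ⟨hjt, htm⟩ := Finset.mem_Icc.1 ht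
      rw [← phi_comp_apply A (Nat.cast_le.2 hjt) (Nat.cast_le.2 htm), norm_eq_zero.1 h, map_zero,
        norm_zero])
  calc ((m : ℝ) - j + 1) * ‖Phi A m j v‖ = (Finset.Icc j m).card * ‖Phi A m j v‖ := by
        rw [Nat.card_Icc, Nat.cast_sub (by omega)]; push_cast; ring
    _ ≤ c * ‖v‖ * c := by
        rw [mul_assoc] at hcard
        exact hcard.trans
          (by gcongr; exact hc.sum_inv_norm_mul_norm_phi_le_of_mem_stableSubspace hj m hv)
    _ = c ^ 2 * ‖v‖ := by ring

theorem norm_phi_le_norm_phi (hc : IsSolutionBound A Z c) (hc1 : 1 ≤ c) {z : X} (hz : z ∈ Z)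
    {j k : ℕ} (hjk : j ≤ k) : ‖Phi A j 0 z‖ ≤ c * ‖Phi A k 0 z‖ := by
  rcases hjk.eq_or_lt with rfl | hjk
  · exact le_mul_of_one_le_left (norm_nonneg _) hc1
  set u : ℕ → X := fun i => Phi A i 0 z
  obtain ⟨C, hC⟩ := exists_forall_le_of_eq_zero (m := k)
    (f := fun i => |if i < k then (1 : ℝ) else 0| * ‖u i‖) fun i hi => by simp [not_lt.2 hi]
  have key := hc.abs_mul_norm_le (u := u) (φ := fun i => if i < k then 1 else 0) (M := ‖u k‖)
    (fun i _ => phi_natCast_succ_apply A i.zero_le z) (Z.smul_mem _ (by simpa [u, phi_self]))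
    ⟨C, hC⟩ (fun i => by
      by_cases h : i + 1 = k
      · simp [h, show i < k by omega]
      · have : (i + 1 < k) = (i < k) := by apply propext; omega
        simp [this]) j
  simpa [hjk] using key

theorem sum_inv_norm_mul_norm_phi_le (hc : IsSolutionBound A Z c) {z : X} (hz : z ∈ Z)
    (k m : ℕ) : (∑ t ∈ Finset.Ioc k m, ‖Phi A t 0 z‖⁻¹) * ‖Phi A k 0 z‖ ≤ c := by
  set u : ℕ → X := fun i => Phi A i 0 z
  set D := ∑ t ∈ Finset.Ioc k m, ‖u t‖⁻¹
  set φ : ℕ → ℝ := fun i => D - ∑ t ∈ Finset.Ioc k m, if t ≤ i then ‖u t‖⁻¹ else 0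
  have hφk : φ k = D := by
    simp only [φ, sub_eq_self]
    exact Finset.sum_eq_zero fun t ht => if_neg (by rw [Finset.mem_Ioc] at ht; omega)
  have hφ_zero : ∀ i, m ≤ i → φ i = 0 := fun i hi => sub_eq_zero.2
    (Finset.sum_congr rfl fun t ht => (if_pos (by rw [Finset.mem_Ioc] at ht; omega)).symm)
  have hφ_succ : ∀ i, φ (i + 1) - φ i = -if i + 1 ∈ Finset.Ioc k m then ‖u (i + 1)‖⁻¹ else 0 :=
    fun i => by
      rw [← sum_ite_le_succ_sub_sum_ite_le (Finset.Ioc k m) (fun t => ‖u t‖⁻¹) i]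
      simp only [φ]
      ring
  obtain ⟨C, hC⟩ := exists_forall_le_of_eq_zero (m := m) (f := fun i => |φ i| * ‖u i‖)
    fun i hi => by simp [hφ_zero i hi]
  have key := hc.abs_mul_norm_le (u := u) (φ := φ) (M := 1)
    (fun i _ => phi_natCast_succ_apply A i.zero_le z) (Z.smul_mem _ (by simpa [u, phi_self]))
    ⟨C, hC⟩ (fun i => by
      rw [hφ_succ, abs_neg]
      split_ifs
      · rw [abs_of_nonneg (by positivity)]; exact inv_mul_le_one
      · simp) k
  rwa [hφk, mul_one, abs_of_nonneg (Finset.sum_nonneg fun t _ => by positivity)] at key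

theorem mul_norm_phi_le_norm_phi (hc : IsSolutionBound A Z c) (hc1 : 1 ≤ c) {z : X} (hz : z ∈ Z)
    {k m : ℕ} (hkm : k ≤ m) : ((m : ℝ) - k + 1) * ‖Phi A k 0 z‖ ≤ 2 * c ^ 2 * ‖Phi A m 0 z‖ := by
  have hcard := card_mul_le_mul_sum_inv_mul (Finset.Ioc k m) (a := fun t => ‖Phi A t 0 z‖)
    (B := c * ‖Phi A m 0 z‖) (norm_nonneg (Phi A k 0 z)) (fun t _ => norm_nonneg _)
    (fun t ht => hc.norm_phi_le_norm_phi hc1 hz (Finset.mem_Ioc.1 ht).2)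
    (fun t ht h => by
      have := hc.norm_phi_le_norm_phi hc1 hz (Finset.mem_Ioc.1 ht).1.le
      rw [h, mul_zero] at this
      exact le_antisymm this (norm_nonneg _))
  rw [mul_assoc] at hcard
  calc ((m : ℝ) - k + 1) * ‖Phi A k 0 z‖
      = (Finset.Ioc k m).card * ‖Phi A k 0 z‖ + ‖Phi A k 0 z‖ := by
        rw [Nat.card_Ioc, Nat.cast_sub hkm]; ring
    _ ≤ c * ‖Phi A m 0 z‖ * c + c * ‖Phi A m 0 z‖ :=
        add_le_add (hcard.trans (by gcongr; exact hc.sum_inv_norm_mul_norm_phi_le hz k m))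
          (hc.norm_phi_le_norm_phi hc1 hz hkm)
    _ ≤ c * ‖Phi A m 0 z‖ * c + c * c * ‖Phi A m 0 z‖ := by
        gcongr
        exact le_mul_of_one_le_left (by positivity) hc1
    _ = 2 * c ^ 2 * ‖Phi A m 0 z‖ := by ring

theorem mul_norm_phi_le_of_mem_stableSubspace (hc : IsSolutionBound A Z c) (hc1 : 1 ≤ c)
    {j m : ℕ} (hjm : j ≤ m) {v : X} (hv : v ∈ stableSubspace A j) :
    ((m : ℝ) - j + 1) * ‖Phi A m j v‖ ≤ 2 * c ^ 2 * max ‖A 0‖ 1 * ‖v‖ := by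
  have hA1 := le_max_right ‖A 0‖ 1
  have hc2 : c ^ 2 ≤ 2 * c ^ 2 * max ‖A 0‖ 1 := by nlinarith
  rcases Nat.eq_zero_or_pos j with rfl | hj
  swap
  · exact (hc.mul_norm_phi_le_of_mem_stableSubspace_of_pos hc1 hj hjm hv).trans (by gcongr)
  rcases Nat.eq_zero_or_pos m with rfl | hm
  · simpa [phi_self] using le_mul_of_one_le_left (norm_nonneg v)
      (show (1 : ℝ) ≤ 2 * c ^ 2 * max ‖A 0‖ 1 by nlinarith)
  -- a solution starting at time `0` is one starting at time `1`, after one step of norm `≤ ‖A 0‖`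
  have h1 : Phi A (1 : ℕ) (0 : ℕ) v = A 0 v := phi_natCast_succ_self_apply A 0 v
  have hv1 : A 0 v ∈ stableSubspace A 1 := h1 ▸ (phi_mem_stableSubspace_iff zero_le_one).2 hv
  have h := hc.mul_norm_phi_le_of_mem_stableSubspace_of_pos hc1 one_pos hm hv1
  rw [← h1, phi_comp_apply A (Nat.cast_le.2 zero_le_one) (Nat.cast_le.2 hm), h1] at h
  have hm' : (1 : ℝ) ≤ m := by exact_mod_cast hm
  calc ((m : ℝ) - (0 : ℕ) + 1) * ‖Phi A m (0 : ℕ) v‖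
      ≤ 2 * (((m : ℝ) - (1 : ℕ) + 1) * ‖Phi A m (0 : ℕ) v‖) := by
        rw [← mul_assoc]; gcongr; push_cast; linarith
    _ ≤ 2 * (c ^ 2 * ‖A 0 v‖) := mul_le_mul_of_nonneg_left h zero_le_two
    _ ≤ 2 * (c ^ 2 * (‖A 0‖ * ‖v‖)) := by gcongr; exact (A 0).le_opNorm v
    _ ≤ 2 * c ^ 2 * max ‖A 0‖ 1 * ‖v‖ := by
        rw [← mul_assoc, ← mul_assoc]; gcongr; exact le_max_left _ _

theorem isClosed_stableSubspace (hc : IsSolutionBound A Z c) (hc1 : 1 ≤ c) (n : ℕ) :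
    IsClosed (stableSubspace A n : Set X) := by
  set C := 2 * c ^ 2 * max ‖A 0‖ 1
  have hS : (stableSubspace A n : Set X) = ⋂ m ∈ Set.Ici n, {v | ‖Phi A m n v‖ ≤ C * ‖v‖} := by
    ext v
    simp only [Set.mem_iInter, Set.mem_Ici, Set.mem_ofPred_eq, SetLike.mem_coe]
    refine ⟨fun hv m hnm => ?_, fun h => ⟨C * ‖v‖, h⟩⟩
    have h := hc.mul_norm_phi_le_of_mem_stableSubspace hc1 hnm hv
    have : (1 : ℝ) ≤ m - n + 1 := by linarith [(Nat.cast_le (α := ℝ)).2 hnm]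
    nlinarith [norm_nonneg (Phi A m n v)]
  rw [hS]
  exact isClosed_biInter fun m _ => isClosed_le (by fun_prop) (by fun_prop)

theorem exists_exp_bounds (hc : IsSolutionBound A Z c) (hc1 : 1 ≤ c) : ∃ K α : ℝ, 0 < K ∧ 0 < α ∧
    (∀ ⦃j m : ℕ⦄ ⦃v : X⦄, j ≤ m → v ∈ stableSubspace A j →
      ‖Phi A m j v‖ ≤ K * exp (-α * ((m : ℝ) - j)) * ‖v‖) ∧
    (∀ ⦃k m : ℕ⦄ ⦃z : X⦄, k ≤ m → z ∈ Z →
      ‖Phi A k 0 z‖ ≤ K * exp (-α * ((m : ℝ) - k)) * ‖Phi A m 0 z‖) := by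
  have hA1 := le_max_right ‖A 0‖ 1
  have hC : 0 < 2 * c ^ 2 * max ‖A 0‖ 1 := by positivity
  obtain ⟨K, α, hK, hα, hdecay⟩ := exists_exp_decay_of_linear_decay hC
  refine ⟨K, α, hK, hα, fun j m v hjm hv => ?_, fun k m z hkm hz => ?_⟩
  · simpa [phi_self] using hdecay (fun t => ‖Phi A t j v‖) j m (fun _ => norm_nonneg _) hjm
      fun a b hja hab _ => by
        rw [← phi_comp_apply A (Nat.cast_le.2 hja) (Nat.cast_le.2 hab)]
        exact hc.mul_norm_phi_le_of_mem_stableSubspace hc1 hab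
          ((phi_mem_stableSubspace_iff hja).2 hv)
  · -- the growth of `Phi A · 0 z` backwards from time `m` is a decay
    have h := hdecay (fun t => ‖Phi A (m - t : ℕ) 0 z‖) 0 (m - k) (fun _ => norm_nonneg _)
      (Nat.zero_le _) fun a b _ hab hb => by
        have := hc.mul_norm_phi_le_norm_phi hc1 hz (show m - b ≤ m - a by omega)
        rw [Nat.cast_sub (by omega), Nat.cast_sub (by omega)] at this
        refine le_trans (le_of_eq (by ring_nf)) (this.trans ?_)
        exact mul_le_mul_of_nonneg_right (le_mul_of_one_le_right (by positivity) hA1)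
          (norm_nonneg _)
    simpa [Nat.sub_sub_self hkm, Nat.cast_sub hkm] using h

end IsSolutionBound

theorem Submodule.projection_add_of_mem {R M : Type*} [Ring R] [AddCommGroup M] [Module R M]
    {p q : Submodule R M} (h : IsCompl p q) {s u : M}
    (hs : s ∈ p) (hu : u ∈ q) : p.projection q h (s + u) = s := by
  rw [map_add, Submodule.projection_apply_of_mem_left h hs,
    Submodule.projection_apply_of_mem_right h hu, add_zero]

theorem Submodule.projection_apply_of_mapsTo {R M N : Type*} [Ring R] [AddCommGroup M]
    [Module R M] [AddCommGroup N] [Module R N] {p q : Submodule R M} {p' q' : Submodule R N}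
    (h : IsCompl p q) (h' : IsCompl p' q') {f : M →ₗ[R] N} (hp : ∀ x ∈ p, f x ∈ p')
    (hq : ∀ x ∈ q, f x ∈ q') (v : M) : p'.projection q' h' (f v) = f (p.projection q h v) := by
  conv_lhs => rw [← Submodule.projection_add_projection_eq_self h v, map_add]
  exact Submodule.projection_add_of_mem h' (hp _ (Submodule.projection_apply_mem h v))
    (hq _ (Submodule.projection_apply_mem h.symm v))

section Projections

variable {A : ℤ → X →L[ℝ] X} {Z : Submodule ℝ X}

variable (A Z) in
def unstableSubspace (n : ℕ) : Submodule ℝ X := Z.map (Phi A n 0 : X →ₗ[ℝ] X)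

theorem unstableSubspace_zero : unstableSubspace A Z 0 = Z := by
  simp [unstableSubspace, phi_self]

theorem mem_stableSubspace_succ_iff {n : ℕ} {v : X} :
    A n v ∈ stableSubspace A (n + 1) ↔ v ∈ stableSubspace A n := by
  rw [← phi_natCast_succ_self_apply, phi_mem_stableSubspace_iff n.le_succ]

theorem mem_unstableSubspace_succ {n : ℕ} {v : X} (hv : v ∈ unstableSubspace A Z n) :
    A n v ∈ unstableSubspace A Z (n + 1) := by
  obtain ⟨z, hz, rfl⟩ := hv
  exact ⟨z, hz, phi_natCast_succ_apply A n.zero_le z⟩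

theorem bijOn_unstableSubspace {n : ℕ}
    (h : Disjoint (stableSubspace A n) (unstableSubspace A Z n)) :
    Set.BijOn (A n) (unstableSubspace A Z n) (unstableSubspace A Z (n + 1)) := by
  refine ⟨fun v hv => mem_unstableSubspace_succ hv, fun v hv w hw hvw => ?_, ?_⟩
  · have hS : v - w ∈ stableSubspace A n := by
      rw [← mem_stableSubspace_succ_iff, map_sub, hvw, sub_self]
      exact Submodule.zero_mem _
    exact sub_eq_zero.1 (Submodule.disjoint_def.1 h _ hS (Submodule.sub_mem _ hv hw))
  · rintro _ ⟨z, hz, rfl⟩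
    exact ⟨Phi A n 0 z, ⟨z, hz, rfl⟩, (phi_natCast_succ_apply A n.zero_le z).symm⟩

end Projections

theorem isExpDichotomy_of_nat {A : ℤ → X →L[ℝ] X} {P : ℕ → X →L[ℝ] X} {K α : ℝ} (hK : 0 < K)
    (hα : 0 < α) (hidem : ∀ n, (P n).comp (P n) = P n)
    (hcomm : ∀ n : ℕ, (A n).comp (P n) = (P (n + 1)).comp (A n))
    (hbij : ∀ n : ℕ, Set.BijOn (A n) {x | P n x = 0} {x | P (n + 1) x = 0})
    (hstable : ∀ m n : ℕ, n ≤ m → ‖(Phi A m n).comp (P n)‖ ≤ K * exp (-α * ((m : ℝ) - n)))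
    (hunstable : ∀ m n : ℕ, m ≤ n → ∀ x y : X, P m x = 0 → Phi A n m x = y - P n y →
      ‖x‖ ≤ K * exp (-α * ((n : ℝ) - m)) * ‖y‖) :
    IsExpDichotomy {n : ℤ | 0 ≤ n} {n : ℤ | 0 ≤ n} A fun n => P n.toNat := by
  refine ⟨K, α, hK, hα, fun n hn => ?_, fun n hn => ?_, fun n hn => ?_, fun m n hm hn hnm => ?_,
    fun m n hm hn hmn => ?_⟩
  all_goals lift n to ℕ using hn
  · simpa using hidem n
  · simpa [show ((n : ℤ) + 1).toNat = n + 1 by omega] using hcomm n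
  · simpa [show ((n : ℤ) + 1).toNat = n + 1 by omega] using hbij n
  · lift m to ℕ using hm
    simpa using hstable m n (by exact_mod_cast hnm)
  · lift m to ℕ using hm
    simpa using hunstable m n (by exact_mod_cast hmn)

namespace IsSolutionBound

variable {A : ℤ → X →L[ℝ] X} {Z : Submodule ℝ X} {c : ℝ}

theorem exists_decomposition (hc : IsSolutionBound A Z c) (hsol : HasBoundedSolutions A Z)
    (k : ℕ) (v : X) : ∃ s ∈ stableSubspace A (k + 1), ∃ u ∈ unstableSubspace A Z (k + 1),
      v = s + u ∧ ‖s‖ ≤ c * ‖v‖ := by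
  have hy : ∀ n, ‖if n = k then v else 0‖ ≤ ‖v‖ := fun n => by split_ifs <;> simp
  obtain ⟨x, hx0, hx, hrec⟩ := hsol _ ⟨‖v‖, hy⟩
  have hk : x k = Phi A k 0 (x 0) := by
    simpa using eq_phi_of_succ_eq A k.zero_le fun i _ hik => by simp [hrec, hik.ne]
  refine ⟨x (k + 1),
    mem_stableSubspace_of_succ_eq hx fun m hm => by simp [hrec, show m ≠ k by omega],
    Phi A (k + 1 : ℕ) 0 (-x 0), ⟨-x 0, Z.neg_mem hx0, rfl⟩, ?_, hc hx0 hrec hx hy (k + 1)⟩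
  have hk1 : Phi A (k + 1 : ℕ) 0 (x 0) = A k (Phi A k 0 (x 0)) :=
    phi_natCast_succ_apply A k.zero_le (x 0)
  rw [hrec, hk, map_neg, hk1]
  simp

theorem isCompl_stableSubspace_unstableSubspace (hc : IsSolutionBound A Z c)
    (hZ : IsCompl (stableSubspace A 0) Z) (hsol : HasBoundedSolutions A Z) (n : ℕ) :
    IsCompl (stableSubspace A n) (unstableSubspace A Z n) := by
  refine ⟨Submodule.disjoint_def.2 ?_, ?_⟩
  · rintro _ hs ⟨z, hz, rfl⟩
    have : z ∈ stableSubspace A 0 := (phi_mem_stableSubspace_iff n.zero_le).1 (by simpa using hs)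
    simp [Submodule.disjoint_def.1 hZ.disjoint z this hz]
  · rcases n with _ | k
    · simpa [unstableSubspace_zero] using hZ.codisjoint
    · refine Submodule.codisjoint_iff_exists_add_eq.2 fun v => ?_
      obtain ⟨s, hs, u, hu, hv, -⟩ := hc.exists_decomposition hsol k v
      exact ⟨s, u, hs, hu, hv.symm⟩

theorem exists_norm_projection_le [CompleteSpace X] (hc : IsSolutionBound A Z c) (hc1 : 1 ≤ c)
    (hZc : IsClosed (Z : Set X)) (hsol : HasBoundedSolutions A Z)
    (hcompl : ∀ n, IsCompl (stableSubspace A n) (unstableSubspace A Z n)) :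
    ∃ C, 0 ≤ C ∧ ∀ n v, ‖(stableSubspace A n).projection _ (hcompl n) v‖ ≤ C * ‖v‖ := by
  have hU0 : IsClosed (unstableSubspace A Z 0 : Set X) := by rwa [unstableSubspace_zero]
  let P0 : X →L[ℝ] X := ⟨_, (Submodule.IsCompl.isTopCompl_of_isClosed (hcompl 0)
    (hc.isClosed_stableSubspace hc1 0) hU0).continuous_projection⟩
  refine ⟨max ‖P0‖ c, le_max_of_le_right (zero_le_one.trans hc1), fun n v => ?_⟩
  rcases n with _ | k
  · exact (P0.le_opNorm v).trans (by gcongr; exact le_max_left _ _)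
  · obtain ⟨s, hs, u, hu, rfl, hsv⟩ := hc.exists_decomposition hsol k v
    rw [Submodule.projection_add_of_mem _ hs hu]
    exact hsv.trans (by gcongr; exact le_max_right _ _)

theorem expDichotomy [CompleteSpace X] (hc : IsSolutionBound A Z c) (hc1 : 1 ≤ c)
    (hZc : IsClosed (Z : Set X)) (hZ : IsCompl (stableSubspace A 0) Z)
    (hsol : HasBoundedSolutions A Z) : ExpDichotomy {n : ℤ | 0 ≤ n} {n : ℤ | 0 ≤ n} A := by
  have hcompl := hc.isCompl_stableSubspace_unstableSubspace hZ hsol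
  obtain ⟨C, hC0, hC⟩ := hc.exists_norm_projection_le hc1 hZc hsol hcompl
  obtain ⟨K, α, hK, hα, hst, hun⟩ := hc.exists_exp_bounds hc1
  let P (n : ℕ) : X →L[ℝ] X := ((stableSubspace A n).projection _ (hcompl n)).mkContinuous C (hC n)
  have hker : ∀ n v, P n v = 0 ↔ v ∈ unstableSubspace A Z n :=
    fun n v => Submodule.projection_apply_eq_zero_iff _
  refine ⟨fun n => P n.toNat, isExpDichotomy_of_nat (K := K * (1 + C)) (by positivity) hα
    (fun n => ?_) (fun n => ?_) (fun n => ?_) (fun m n hnm => ?_) (fun m n hmn x y hx hxy => ?_)⟩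
  · ext v
    exact Submodule.projection_apply_of_mem_left _ (Submodule.projection_apply_mem _ v)
  · ext v
    exact (Submodule.projection_apply_of_mapsTo (hcompl n) (hcompl (n + 1))
      (fun _ => mem_stableSubspace_succ_iff.2) (fun _ => mem_unstableSubspace_succ) v).symm
  · simpa [hker] using bijOn_unstableSubspace (hcompl n).disjoint
  · refine opNorm_le_bound _ (by positivity) fun v => ?_
    calc ‖Phi A m n (P n v)‖ ≤ K * exp (-α * ((m : ℝ) - n)) * (C * ‖v‖) :=
          (hst hnm (Submodule.projection_apply_mem _ v)).trans (by gcongr; exact hC n v)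
      _ ≤ K * exp (-α * ((m : ℝ) - n)) * ((1 + C) * ‖v‖) := by gcongr; linarith [norm_nonneg v]
      _ = K * (1 + C) * exp (-α * ((m : ℝ) - n)) * ‖v‖ := by ring
  · obtain ⟨z, hz, rfl⟩ := (hker m x).1 hx
    simp only [ContinuousLinearMap.coe_coe] at hxy ⊢
    rw [phi_comp_apply A (Nat.cast_nonneg m) (Nat.cast_le.2 hmn)] at hxy
    calc ‖Phi A m 0 z‖ ≤ K * exp (-α * ((n : ℝ) - m)) * ‖Phi A n 0 z‖ := hun hmn hz
      _ ≤ K * exp (-α * ((n : ℝ) - m)) * (‖y‖ + C * ‖y‖) := by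
          rw [hxy]; gcongr; exact (norm_sub_le _ _).trans (by gcongr; exact hC n y)
      _ = K * (1 + C) * exp (-α * ((n : ℝ) - m)) * ‖y‖ := by ring

end IsSolutionBound

theorem exists_isCompl_of_isComplementedSubspace {A : ℤ → X →L[ℝ] X}
    (h : IsComplementedSubspace (Sset A)) :
    ∃ Z : Submodule ℝ X, IsClosed (Z : Set X) ∧ IsCompl (stableSubspace A 0) Z := by
  obtain ⟨Z, hZc, hdisj, hspan⟩ := h
  refine ⟨Z, hZc, Submodule.disjoint_def.2 fun v hv => hdisj v ?_,
    Submodule.codisjoint_iff_exists_add_eq.2 fun v => ?_⟩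
  · rwa [← coe_stableSubspace_zero]
  · obtain ⟨s, hs, z, hz, rfl⟩ := hspan v
    exact ⟨s, z, by rwa [← SetLike.mem_coe, coe_stableSubspace_zero], hz, rfl⟩

theorem dichotomy_of_admissibility_Zplus {X : Type u} [NormedAddCommGroup X]
    [NormedSpace ℝ X] [CompleteSpace X] (A : ℤ → X →L[ℝ] X)
    (hadm : ∀ y : ℤ → X, (∃ C : ℝ, ∀ n : ℤ, 0 ≤ n → ‖y n‖ ≤ C) →
      ∃ x : ℤ → X, (∃ C : ℝ, ∀ n : ℤ, 0 ≤ n → ‖x n‖ ≤ C) ∧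
        ∀ n : ℤ, 0 ≤ n → x (n + 1) = A n (x n) + y n)
    (hcompl : IsComplementedSubspace (Sset A)) :
    ExpDichotomy {n : ℤ | 0 ≤ n} {n : ℤ | 0 ≤ n} A ∧ IsClosed (Sset A) := by
  obtain ⟨Z, hZc, hZ⟩ := exists_isCompl_of_isComplementedSubspace hcompl
  have hsol := hasBoundedSolutions_of_codisjoint hadm hZ.codisjoint
  obtain ⟨c, hc1, hc⟩ := exists_isSolutionBound hZc hZ.disjoint hsol
  refine ⟨hc.expDichotomy hc1 hZc hZ hsol, ?_⟩
  rw [← coe_stableSubspace_zero]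
  exact hc.isClosed_stableSubspace hc1 0

end
end
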